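/- arXiv:2108.11871 — 3 statements merged into one kernel-verified Lean document; each statement's English description precedes it below -/
import Mathlib

section
/- If u ∈ C⁶(ℝ²) satisfies Δu = f with f ∈ C⁴, then the modified discrete operator satisfies [Δ_h + (h_x²/12) D²_x D²_y + (h_y²/12) D²_x D²_y] u(x,y) = f(x,y) + (h_x²/12)(D²_x f)(x,y) + (h_y²/12)(D²_y f)(x,y) + O(|h|⁴), where |h| = max(h_x, h_y), with error bounded by C|h|⁴ times bounds on sixth derivatives of u and fourth derivatives of f. -/
/-- Three-point second difference in the first coordinate with mesh width `h`. -/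
noncomputable def Dx2 (h : ℝ) (u : ℝ × ℝ → ℝ) : ℝ × ℝ → ℝ :=
  fun p => (u (p.1 + h, p.2) - 2 * u p + u (p.1 - h, p.2)) / h ^ 2

/-- Three-point second difference in the second coordinate with mesh width `h`. -/
noncomputable def Dy2 (h : ℝ) (u : ℝ × ℝ → ℝ) : ℝ × ℝ → ℝ :=
  fun p => (u (p.1, p.2 + h) - 2 * u p + u (p.1, p.2 - h)) / h ^ 2

open Set Finset

/-! ### One-dimensional Taylor estimates -/

private lemma iDW_eq {n k : ℕ} (hk : k ≤ n) {g : ℝ → ℝ} (hg : ContDiff ℝ (n:ℕ) g)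
    {a b y : ℝ} (hab : a < b) (hy : y ∈ Icc a b) :
    iteratedDerivWithin k g (Icc a b) y = iteratedDeriv k g y := by
  rw [iteratedDerivWithin_eq_iteratedFDerivWithin, iteratedDeriv_eq_iteratedFDeriv]
  congr 1
  have hS : HasFTaylorSeriesUpTo (n : ℕ∞) g (ftaylorSeries ℝ g) :=
    contDiff_iff_ftaylorSeries.mp hg
  exact ((hS.hasFTaylorSeriesUpToOn _).eq_iteratedFDerivWithin_of_uniqueDiffOn
    (by exact_mod_cast hk) (uniqueDiffOn_Icc hab) hy).symm

private lemma taylor_plus {n : ℕ} {g : ℝ → ℝ} {M : ℝ} (hg : ContDiff ℝ (n+1:ℕ) g)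
    (hM : ∀ t, |iteratedDeriv (n+1) g t| ≤ M) {c h : ℝ} (hh : 0 < h) :
    |g (c + h) - ∑ k ∈ Finset.range (n+1),
        ((k.factorial : ℝ))⁻¹ * h ^ k * iteratedDeriv k g c|
      ≤ M * h ^ (n+1) / n.factorial := by
  have hlt : c < c + h := by linarith
  have hab : c ≤ c + h := le_of_lt hlt
  have hx : c + h ∈ Icc c (c + h) := by constructor <;> linarith
  have hc : c ∈ Icc c (c + h) := by constructor <;> linarith
  have hb := taylor_mean_remainder_bound (f := g) (a := c) (b := c + h) (x := c + h)
    (n := n) (C := M) hab (hg.contDiffOn) hx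
    (fun y hy => by
      rw [iDW_eq le_rfl hg hlt hy]
      simpa using hM y)
  rw [taylor_within_apply] at hb
  calc |g (c + h) - ∑ k ∈ Finset.range (n+1),
        ((k.factorial : ℝ))⁻¹ * h ^ k * iteratedDeriv k g c|
      = ‖g (c+h) - ∑ k ∈ Finset.range (n + 1),
          (((k.factorial : ℝ))⁻¹ * (c + h - c) ^ k) • iteratedDerivWithin k g (Icc c (c+h)) c‖ := by
        rw [Real.norm_eq_abs]
        congr 1
        congr 1
        refine Finset.sum_congr rfl fun k hk => ?_
        rw [iDW_eq (by simp at hk; omega : k ≤ n+1) hg hlt hc]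
        simp only [smul_eq_mul, add_sub_cancel_left]
    _ ≤ M * (c + h - c) ^ (n+1) / n.factorial := hb
    _ = M * h ^ (n+1) / n.factorial := by ring_nf

private lemma refl_iter (g : ℝ → ℝ) (c : ℝ) (k : ℕ) (t : ℝ) :
    iteratedDeriv k (fun s => g (2*c - s)) t = (-1:ℝ)^k * iteratedDeriv k g (2*c - t) := by
  have h2 := iteratedDeriv_comp_neg k (fun r => g (2*c + r)) t
  simp only [iteratedDeriv_comp_const_add] at h2
  simp only [sub_eq_add_neg]
  rw [h2, smul_eq_mul]

private lemma taylor_minus {n : ℕ} {g : ℝ → ℝ} {M : ℝ} (hg : ContDiff ℝ (n+1:ℕ) g)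
    (hM : ∀ t, |iteratedDeriv (n+1) g t| ≤ M) {c h : ℝ} (hh : 0 < h) :
    |g (c - h) - ∑ k ∈ Finset.range (n+1),
        (-1:ℝ)^k * ((k.factorial : ℝ))⁻¹ * h ^ k * iteratedDeriv k g c|
      ≤ M * h ^ (n+1) / n.factorial := by
  have hG : ContDiff ℝ (n+1:ℕ) (fun s => g (2*c - s)) :=
    hg.comp ((contDiff_const.sub contDiff_id))
  have hMG : ∀ t, |iteratedDeriv (n+1) (fun s => g (2*c - s)) t| ≤ M := by
    intro t
    rw [refl_iter]
    rw [abs_mul, abs_pow, abs_neg, abs_one, one_pow, one_mul]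
    exact hM _
  have := taylor_plus hG hMG (c := c) hh
  have e1 : (2*c - (c + h)) = c - h := by ring
  have e2 : ∀ k ∈ Finset.range (n+1),
      ((k.factorial : ℝ))⁻¹ * h ^ k * iteratedDeriv k (fun s => g (2*c - s)) c
      = (-1:ℝ)^k * ((k.factorial : ℝ))⁻¹ * h ^ k * iteratedDeriv k g c := by
    intro k _
    rw [refl_iter]
    have : 2*c - c = c := by ring
    rw [this]; ring
  rw [e1, Finset.sum_congr rfl e2] at this
  exact this

private lemma symA {g : ℝ → ℝ} {M : ℝ} (hg : ContDiff ℝ (6:ℕ) g)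
    (hM : ∀ t, |iteratedDeriv 6 g t| ≤ M) {c h : ℝ} (hh : 0 < h) :
    |(g (c+h) - 2*g c + g (c-h))/h^2 - iteratedDeriv 2 g c
        - h^2/12 * iteratedDeriv 4 g c| ≤ M * h^4 / 60 := by
  have hP := taylor_plus (n := 5) (c := c) hg hM hh
  have hQ := taylor_minus (n := 5) (c := c) hg hM hh
  simp only [Finset.sum_range_succ, Finset.sum_range_zero] at hP hQ
  have h2 : (0:ℝ) < h^2 := by positivity
  have key : (g (c+h) - 2*g c + g (c-h))
      - (h^2 * iteratedDeriv 2 g c + h^4/12 * iteratedDeriv 4 g c)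
      = (g (c+h) - (0 + (Nat.factorial 0:ℝ)⁻¹ * h^0 * iteratedDeriv 0 g c
          + (Nat.factorial 1:ℝ)⁻¹ * h^1 * iteratedDeriv 1 g c
          + (Nat.factorial 2:ℝ)⁻¹ * h^2 * iteratedDeriv 2 g c
          + (Nat.factorial 3:ℝ)⁻¹ * h^3 * iteratedDeriv 3 g c
          + (Nat.factorial 4:ℝ)⁻¹ * h^4 * iteratedDeriv 4 g c
          + (Nat.factorial 5:ℝ)⁻¹ * h^5 * iteratedDeriv 5 g c))
      + (g (c-h) - (0 + (-1:ℝ)^0 * (Nat.factorial 0:ℝ)⁻¹ * h^0 * iteratedDeriv 0 g c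
          + (-1:ℝ)^1 * (Nat.factorial 1:ℝ)⁻¹ * h^1 * iteratedDeriv 1 g c
          + (-1:ℝ)^2 * (Nat.factorial 2:ℝ)⁻¹ * h^2 * iteratedDeriv 2 g c
          + (-1:ℝ)^3 * (Nat.factorial 3:ℝ)⁻¹ * h^3 * iteratedDeriv 3 g c
          + (-1:ℝ)^4 * (Nat.factorial 4:ℝ)⁻¹ * h^4 * iteratedDeriv 4 g c
          + (-1:ℝ)^5 * (Nat.factorial 5:ℝ)⁻¹ * h^5 * iteratedDeriv 5 g c)) := by
    simp only [iteratedDeriv_zero]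
    norm_num [Nat.factorial]
    ring
  have habs : |(g (c+h) - 2*g c + g (c-h))
      - (h^2 * iteratedDeriv 2 g c + h^4/12 * iteratedDeriv 4 g c)|
      ≤ M * h^6 / 60 := by
    rw [key]
    calc _ ≤ _ := abs_add_le _ _
    _ ≤ M * h^6 / 120 + M * h^6 / 120 := by
        gcongr
        · exact le_trans (le_of_eq (by norm_num)) (le_trans hP (by norm_num [Nat.factorial]))
        · exact le_trans (le_of_eq (by norm_num)) (le_trans hQ (by norm_num [Nat.factorial]))
    _ = M * h^6 / 60 := by ring
  have hrw : (g (c+h) - 2*g c + g (c-h))/h^2 - iteratedDeriv 2 g c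
      - h^2/12 * iteratedDeriv 4 g c
      = ((g (c+h) - 2*g c + g (c-h))
        - (h^2 * iteratedDeriv 2 g c + h^4/12 * iteratedDeriv 4 g c)) / h^2 := by
    field_simp
    try ring
  rw [hrw, abs_div, abs_of_pos h2, div_le_iff₀ h2]
  calc _ ≤ M * h^6/60 := habs
  _ = M * h ^ 4 / 60 * h ^ 2 := by ring

private lemma symB {g : ℝ → ℝ} {M : ℝ} (hg : ContDiff ℝ (4:ℕ) g)
    (hM : ∀ t, |iteratedDeriv 4 g t| ≤ M) {c h : ℝ} (hh : 0 < h) :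
    |(g (c+h) - 2*g c + g (c-h))/h^2 - iteratedDeriv 2 g c| ≤ M * h^2 / 3 := by
  have hP := taylor_plus (n := 3) (c := c) hg hM hh
  have hQ := taylor_minus (n := 3) (c := c) hg hM hh
  simp only [Finset.sum_range_succ, Finset.sum_range_zero, iteratedDeriv_zero] at hP hQ
  have h2 : (0:ℝ) < h^2 := by positivity
  have habs : |(g (c+h) - 2*g c + g (c-h)) - h^2 * iteratedDeriv 2 g c| ≤ M * h^4 / 3 := by
    have key : (g (c+h) - 2*g c + g (c-h)) - h^2 * iteratedDeriv 2 g c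
        = (g (c+h) - (0 + (Nat.factorial 0:ℝ)⁻¹ * h^0 * g c
            + (Nat.factorial 1:ℝ)⁻¹ * h^1 * iteratedDeriv 1 g c
            + (Nat.factorial 2:ℝ)⁻¹ * h^2 * iteratedDeriv 2 g c
            + (Nat.factorial 3:ℝ)⁻¹ * h^3 * iteratedDeriv 3 g c))
        + (g (c-h) - (0 + (-1:ℝ)^0 * (Nat.factorial 0:ℝ)⁻¹ * h^0 * g c
            + (-1:ℝ)^1 * (Nat.factorial 1:ℝ)⁻¹ * h^1 * iteratedDeriv 1 g c
            + (-1:ℝ)^2 * (Nat.factorial 2:ℝ)⁻¹ * h^2 * iteratedDeriv 2 g c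
            + (-1:ℝ)^3 * (Nat.factorial 3:ℝ)⁻¹ * h^3 * iteratedDeriv 3 g c)) := by
      norm_num [Nat.factorial]
      ring
    rw [key]
    calc _ ≤ _ := abs_add_le _ _
    _ ≤ M * h^4 / 6 + M * h^4 / 6 := by
        gcongr
        · exact le_trans hP (by norm_num [Nat.factorial])
        · exact le_trans hQ (by norm_num [Nat.factorial])
    _ = M * h^4 / 3 := by ring
  have hrw : (g (c+h) - 2*g c + g (c-h))/h^2 - iteratedDeriv 2 g c
      = ((g (c+h) - 2*g c + g (c-h)) - h^2 * iteratedDeriv 2 g c) / h^2 := by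
    field_simp
    try ring
  rw [hrw, abs_div, abs_of_pos h2, div_le_iff₀ h2]
  calc _ ≤ M * h^4/3 := habs
  _ = M * h ^ 2 / 3 * h ^ 2 := by ring

private lemma symC {g : ℝ → ℝ} {M : ℝ} (hg : ContDiff ℝ (2:ℕ) g)
    (hM : ∀ t, |iteratedDeriv 2 g t| ≤ M) {c h : ℝ} (hh : 0 < h) :
    |(g (c+h) - 2*g c + g (c-h))/h^2| ≤ 2 * M := by
  have hP := taylor_plus (n := 1) (c := c) hg hM hh
  have hQ := taylor_minus (n := 1) (c := c) hg hM hh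
  simp only [Finset.sum_range_succ, Finset.sum_range_zero, iteratedDeriv_zero] at hP hQ
  have h2 : (0:ℝ) < h^2 := by positivity
  have habs : |g (c+h) - 2*g c + g (c-h)| ≤ 2 * M * h^2 := by
    have key : g (c+h) - 2*g c + g (c-h)
        = (g (c+h) - (0 + (Nat.factorial 0:ℝ)⁻¹ * h^0 * g c
            + (Nat.factorial 1:ℝ)⁻¹ * h^1 * iteratedDeriv 1 g c))
        + (g (c-h) - (0 + (-1:ℝ)^0 * (Nat.factorial 0:ℝ)⁻¹ * h^0 * g c
            + (-1:ℝ)^1 * (Nat.factorial 1:ℝ)⁻¹ * h^1 * iteratedDeriv 1 g c)) := by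
      norm_num [Nat.factorial]
      ring
    rw [key]
    calc _ ≤ _ := abs_add_le _ _
    _ ≤ M * h^2 / 1 + M * h^2 / 1 := by
        gcongr
        · exact le_trans hP (by norm_num [Nat.factorial])
        · exact le_trans hQ (by norm_num [Nat.factorial])
    _ = 2 * M * h^2 := by ring
  rw [abs_div, abs_of_pos h2, div_le_iff₀ h2]
  calc _ ≤ 2*M*h^2 := habs
  _ = 2 * M * h ^ 2 := by ring

/-! ### Partial derivative machinery in two dimensions -/

private noncomputable def pd (v : ℝ × ℝ) (w : ℝ × ℝ → ℝ) : ℝ × ℝ → ℝ := fun q => fderiv ℝ w q v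

private lemma pd_contDiff {n : ℕ} {w : ℝ × ℝ → ℝ} (hw : ContDiff ℝ (n+1:ℕ) w) (v : ℝ × ℝ) :
    ContDiff ℝ (n:ℕ) (pd v w) := by
  have h1 : ContDiff ℝ (n:ℕ) (fderiv ℝ w) := hw.fderiv_right (by exact_mod_cast le_rfl)
  exact h1.clm_apply contDiff_const

private lemma pd_comm {w : ℝ × ℝ → ℝ} (hw : ContDiff ℝ (2:ℕ) w) (v v' : ℝ × ℝ) :
    pd v (pd v' w) = pd v' (pd v w) := by
  funext q
  have hdw : ∀ y, HasFDerivAt w (fderiv ℝ w y) y := fun y =>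
    (hw.differentiable (by norm_num) y).hasFDerivAt
  have hfd : Differentiable ℝ (fderiv ℝ w) :=
    (hw.fderiv_right (by norm_num : (1:WithTop ℕ∞) + 1 ≤ (2:ℕ))).differentiable
      (by norm_num)
  have hsym := second_derivative_symmetric hdw (hfd q).hasFDerivAt v v'
  have key : ∀ a b : ℝ × ℝ, pd a (pd b w) q = fderiv ℝ (fderiv ℝ w) q a b := by
    intro a b
    show fderiv ℝ (fun z => (fderiv ℝ w z) b) q a = _
    rw [fderiv_clm_apply (hfd q) (differentiableAt_const b)]
    simp
  rw [key, key, hsym]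

private lemma apply_norm_le (v : ℝ × ℝ) :
    ‖(ContinuousLinearMap.apply ℝ ℝ v : ((ℝ × ℝ) →L[ℝ] ℝ) →L[ℝ] ℝ)‖ ≤ ‖v‖ := by
  refine ContinuousLinearMap.opNorm_le_bound _ (norm_nonneg v) fun L => ?_
  rw [mul_comm]
  exact L.le_opNorm v

private lemma pd_iF_le {n : ℕ} {w : ℝ × ℝ → ℝ} (hw : ContDiff ℝ (n+1:ℕ) w) {v : ℝ × ℝ}
    (hv : ‖v‖ ≤ 1) (q : ℝ × ℝ) :
    ‖iteratedFDeriv ℝ n (pd v w) q‖ ≤ ‖iteratedFDeriv ℝ (n+1) w q‖ := by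
  have hfd : ContDiff ℝ (n:ℕ) (fderiv ℝ w) := hw.fderiv_right (by exact_mod_cast le_rfl)
  have heq : pd v w
      = (ContinuousLinearMap.apply ℝ ℝ v : ((ℝ × ℝ) →L[ℝ] ℝ) →L[ℝ] ℝ) ∘ (fderiv ℝ w) := rfl
  rw [heq, ContinuousLinearMap.iteratedFDeriv_comp_left _ hfd.contDiffAt (x := q) le_rfl]
  calc ‖_‖ ≤ ‖(ContinuousLinearMap.apply ℝ ℝ v : ((ℝ × ℝ) →L[ℝ] ℝ) →L[ℝ] ℝ)‖
      * ‖iteratedFDeriv ℝ n (fderiv ℝ w) q‖ :=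
        ContinuousLinearMap.norm_compContinuousMultilinearMap_le _ _
  _ ≤ 1 * ‖iteratedFDeriv ℝ n (fderiv ℝ w) q‖ := by
      gcongr
      exact le_trans (apply_norm_le v) hv
  _ = ‖iteratedFDeriv ℝ (n+1) w q‖ := by rw [one_mul, norm_iteratedFDeriv_fderiv]

private noncomputable def pds : List (ℝ × ℝ) → (ℝ × ℝ → ℝ) → (ℝ × ℝ → ℝ)
  | [], w => w
  | v :: l, w => pd v (pds l w)

private lemma pds_contDiff : ∀ (l : List (ℝ × ℝ)) {n : ℕ} {w : ℝ × ℝ → ℝ},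
    ContDiff ℝ ((n + l.length : ℕ)) w → ContDiff ℝ (n:ℕ) (pds l w) := by
  intro l
  induction l with
  | nil => intro n w hw; simpa [pds] using hw
  | cons v l ih =>
    intro n w hw
    have hw' : ContDiff ℝ (((n+1) + l.length : ℕ)) w := by
      have : (n+1) + l.length = n + (v :: l).length := by simp [List.length_cons]; omega
      rw [this]; exact hw
    exact pd_contDiff (ih hw') v

private lemma pds_norm_le : ∀ (l : List (ℝ × ℝ)) (_ : ∀ v ∈ l, ‖v‖ ≤ 1) {k : ℕ} {w : ℝ × ℝ → ℝ}
    (_ : ContDiff ℝ ((k + l.length : ℕ)) w) (q : ℝ × ℝ),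
    ‖iteratedFDeriv ℝ k (pds l w) q‖ ≤ ‖iteratedFDeriv ℝ (k + l.length) w q‖ := by
  intro l
  induction l with
  | nil => intro _ k w hw q; simp [pds]
  | cons v l ih =>
    intro hl k w hw q
    have hlen : (k+1) + l.length = k + (v :: l).length := by simp [List.length_cons]; omega
    have hw' : ContDiff ℝ (((k+1) + l.length : ℕ)) w := by rw [hlen]; exact hw
    have h1 : ContDiff ℝ ((k+1 : ℕ)) (pds l w) := pds_contDiff l hw'
    calc ‖iteratedFDeriv ℝ k (pd v (pds l w)) q‖
        ≤ ‖iteratedFDeriv ℝ (k+1) (pds l w) q‖ :=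
          pd_iF_le h1 (hl v (List.mem_cons_self (a := v) (l := l))) q
    _ ≤ ‖iteratedFDeriv ℝ ((k+1) + l.length) w q‖ :=
          ih (fun x hx => hl x (List.mem_cons_of_mem v hx)) hw' q
    _ = ‖iteratedFDeriv ℝ (k + (v :: l).length) w q‖ := by rw [hlen]

private lemma pds_bound (l : List (ℝ × ℝ)) (hl : ∀ v ∈ l, ‖v‖ ≤ 1) {w : ℝ × ℝ → ℝ} {B : ℝ}
    (hw : ContDiff ℝ (l.length : ℕ) w)
    (hB : ∀ q, ‖iteratedFDeriv ℝ l.length w q‖ ≤ B) (q : ℝ × ℝ) :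
    |pds l w q| ≤ B := by
  have h0 : |pds l w q| = ‖iteratedFDeriv ℝ 0 (pds l w) q‖ := by
    rw [norm_iteratedFDeriv_zero, Real.norm_eq_abs]
  rw [h0]
  have hw' : ContDiff ℝ ((0 + l.length : ℕ)) w := by simpa using hw
  calc ‖iteratedFDeriv ℝ 0 (pds l w) q‖ ≤ ‖iteratedFDeriv ℝ (0 + l.length) w q‖ :=
        pds_norm_le l hl hw' q
  _ ≤ B := by rw [Nat.zero_add]; exact hB q

private lemma iterate_pd_eq (v : ℝ × ℝ) (k : ℕ) :
    ∀ w, (pd v)^[k] w = pds (List.replicate k v) w := by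
  induction k with
  | zero => intro w; simp [pds]
  | succ k ih =>
    intro w
    rw [Function.iterate_succ_apply', ih w, List.replicate_succ]
    rfl

private lemma e1_norm : ‖((1:ℝ), (0:ℝ))‖ ≤ 1 := by
  rw [Prod.norm_def]; simp

private lemma e2_norm : ‖((0:ℝ), (1:ℝ))‖ ≤ 1 := by
  rw [Prod.norm_def]; simp

/-! ### Sections -/

private lemma hasFDerivAt_secx (w : ℝ × ℝ → ℝ) {a b : ℝ} (hw : DifferentiableAt ℝ w (a, b)) :
    HasDerivAt (fun x => w (x, b)) (pd (1, 0) w (a, b)) a := by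
  have hin : HasFDerivAt (fun x : ℝ => (x, b)) ((ContinuousLinearMap.id ℝ ℝ).prod 0) a :=
    HasFDerivAt.prodMk (hasFDerivAt_id a) (hasFDerivAt_const b a)
  have := (hw.hasFDerivAt.comp a hin).hasDerivAt
  simpa [pd, Function.comp_def] using this

private lemma hasFDerivAt_secy (w : ℝ × ℝ → ℝ) {a b : ℝ} (hw : DifferentiableAt ℝ w (a, b)) :
    HasDerivAt (fun y => w (a, y)) (pd (0, 1) w (a, b)) b := by
  have hin : HasFDerivAt (fun y : ℝ => (a, y))
      ((0 : ℝ →L[ℝ] ℝ).prod (ContinuousLinearMap.id ℝ ℝ)) b :=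
    HasFDerivAt.prodMk (hasFDerivAt_const a b) (hasFDerivAt_id b)
  have := (hw.hasFDerivAt.comp b hin).hasDerivAt
  simpa [pd, Function.comp_def] using this

private lemma deriv_secx {w : ℝ × ℝ → ℝ} (hw : Differentiable ℝ w) (b : ℝ) :
    deriv (fun x => w (x, b)) = fun a => pd (1, 0) w (a, b) := by
  funext a; exact (hasFDerivAt_secx w (hw _)).deriv

private lemma deriv_secy {w : ℝ × ℝ → ℝ} (hw : Differentiable ℝ w) (a : ℝ) :
    deriv (fun y => w (a, y)) = fun b => pd (0, 1) w (a, b) := by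
  funext b; exact (hasFDerivAt_secy w (hw _)).deriv

private lemma secx_contDiff {n : ℕ} {w : ℝ × ℝ → ℝ} (hw : ContDiff ℝ (n:ℕ) w) (b : ℝ) :
    ContDiff ℝ (n:ℕ) (fun x => w (x, b)) := hw.comp (contDiff_id.prodMk contDiff_const)

private lemma secy_contDiff {n : ℕ} {w : ℝ × ℝ → ℝ} (hw : ContDiff ℝ (n:ℕ) w) (a : ℝ) :
    ContDiff ℝ (n:ℕ) (fun y => w (a, y)) := hw.comp (contDiff_const.prodMk contDiff_id)

private lemma iter_secx (k : ℕ) : ∀ (w : ℝ × ℝ → ℝ), ContDiff ℝ (k:ℕ) w → ∀ a b,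
    iteratedDeriv k (fun x => w (x, b)) a = (pd (1, 0))^[k] w (a, b) := by
  induction k with
  | zero => intro w _ a b; simp
  | succ k ih =>
    intro w hw a b
    rw [iteratedDeriv_succ']
    have hd : deriv (fun x => w (x, b)) = fun x => pd (1, 0) w (x, b) :=
      deriv_secx (hw.differentiable
        (by simp)) b
    rw [hd, ih (pd (1, 0) w) (pd_contDiff hw _) a b, Function.iterate_succ_apply]

private lemma iter_secy (k : ℕ) : ∀ (w : ℝ × ℝ → ℝ), ContDiff ℝ (k:ℕ) w → ∀ a b,
    iteratedDeriv k (fun y => w (a, y)) b = (pd (0, 1))^[k] w (a, b) := by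
  induction k with
  | zero => intro w _ a b; simp
  | succ k ih =>
    intro w hw a b
    rw [iteratedDeriv_succ']
    have hd : deriv (fun y => w (a, y)) = fun y => pd (0, 1) w (a, y) :=
      deriv_secy (hw.differentiable
        (by simp)) a
    rw [hd, ih (pd (0, 1) w) (pd_contDiff hw _) a b, Function.iterate_succ_apply]

private lemma iD_comb {n : ℕ} {f1 f2 f3 : ℝ → ℝ} (h1 : ContDiff ℝ (n:ℕ) f1)
    (h2 : ContDiff ℝ (n:ℕ) f2) (h3 : ContDiff ℝ (n:ℕ) f3) (c : ℝ) (x : ℝ) :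
    iteratedDeriv n (fun t => (f1 t - 2 * f2 t + f3 t)/c) x
      = (iteratedDeriv n f1 x - 2 * iteratedDeriv n f2 x + iteratedDeriv n f3 x)/c := by
  have hFeq : (fun t => (f1 t - 2 * f2 t + f3 t)/c) = c⁻¹ • (f1 + ((-2:ℝ) • f2 + f3)) := by
    funext t
    simp only [Pi.smul_apply, Pi.add_apply, smul_eq_mul]
    ring
  have h2' : ContDiff ℝ (n:ℕ) ((-2:ℝ) • f2) := by exact h2.const_smul (-2:ℝ)
  have h23 : ContDiff ℝ (n:ℕ) ((-2:ℝ) • f2 + f3) := by exact h2'.add h3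
  have h123 : ContDiff ℝ (n:ℕ) (f1 + ((-2:ℝ) • f2 + f3)) := by exact h1.add h23
  rw [hFeq, iteratedDeriv_eq_iteratedFDeriv,
    iteratedFDeriv_const_smul_apply h123.contDiffAt,
    iteratedFDeriv_add_apply h1.contDiffAt h23.contDiffAt,
    iteratedFDeriv_add_apply h2'.contDiffAt h3.contDiffAt,
    iteratedFDeriv_const_smul_apply h2.contDiffAt]
  simp only [ContinuousMultilinearMap.smul_apply, ContinuousMultilinearMap.add_apply,
    smul_eq_mul, ← iteratedDeriv_eq_iteratedFDeriv]
  ring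

private lemma iD_add {n : ℕ} {f1 f2 : ℝ → ℝ} (h1 : ContDiff ℝ (n:ℕ) f1)
    (h2 : ContDiff ℝ (n:ℕ) f2) (x : ℝ) :
    iteratedDeriv n (fun t => f1 t + f2 t) x = iteratedDeriv n f1 x + iteratedDeriv n f2 x := by
  have h12 : ContDiff ℝ (n:ℕ) (f1 + f2) := by exact h1.add h2
  have : (fun t => f1 t + f2 t) = f1 + f2 := rfl
  rw [this, iteratedDeriv_eq_iteratedFDeriv, iteratedFDeriv_add_apply h1.contDiffAt h2.contDiffAt]
  simp only [ContinuousMultilinearMap.add_apply, ← iteratedDeriv_eq_iteratedFDeriv]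

private lemma iD2_eq (g : ℝ → ℝ) : iteratedDeriv 2 g = deriv (deriv g) := by
  show iteratedDeriv (1+1) g = deriv (deriv g)
  rw [iteratedDeriv_succ, iteratedDeriv_one]


/-- If `u ∈ C⁶(ℝ²)` satisfies `Δu = f` with `f ∈ C⁴`, then
`[Δ_h + (h_x²/12) D²_x D²_y + (h_y²/12) D²_x D²_y] u
  = f + (h_x²/12) D²_x f + (h_y²/12) D²_y f + O(|h|⁴)`,
with error bounded by `C |h|⁴ B` where `B` bounds the sixth derivatives of `u`
and the fourth derivatives of `f`, and `|h| = max(h_x, h_y)`. -/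
theorem fourth_order_modified_operator_relation :
    ∃ C > 0, ∀ u f : ℝ × ℝ → ℝ, ∀ B : ℝ,
      ContDiff ℝ 6 u → ContDiff ℝ 4 f →
      (∀ p : ℝ × ℝ, ‖iteratedFDeriv ℝ 6 u p‖ ≤ B) →
      (∀ p : ℝ × ℝ, ‖iteratedFDeriv ℝ 4 f p‖ ≤ B) →
      ∀ hx hy : ℝ, 0 < hx → 0 < hy →
      (∀ p : ℝ × ℝ,
        deriv (fun x => deriv (fun x' => u (x', p.2)) x) p.1
          + deriv (fun y => deriv (fun y' => u (p.1, y')) y) p.2 = f p) →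
      ∀ p : ℝ × ℝ,
        |(Dx2 hx u p + Dy2 hy u p)
            + hx ^ 2 / 12 * Dx2 hx (Dy2 hy u) p
            + hy ^ 2 / 12 * Dx2 hx (Dy2 hy u) p
            - (f p + hx ^ 2 / 12 * Dx2 hx f p + hy ^ 2 / 12 * Dy2 hy f p)|
          ≤ C * max hx hy ^ 4 * B := by
  refine ⟨1, one_pos, ?_⟩
  intro u f B hu hf hB6 hB4 hx hy hx0 hy0 hlap p
  have hcast : ∀ {m n : ℕ}, m ≤ n → ((m:ℕ):WithTop ℕ∞) ≤ ((n:ℕ):WithTop ℕ∞) :=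
    fun {m n} h => by exact_mod_cast h
  have hu' : ContDiff ℝ ((6:ℕ)) u := by exact_mod_cast hu
  have hf' : ContDiff ℝ ((4:ℕ)) f := by exact_mod_cast hf
  have hu4 : ContDiff ℝ ((4:ℕ)) u := hu'.of_le (hcast (by norm_num))
  have hu3 : ContDiff ℝ ((3:ℕ)) u := hu'.of_le (hcast (by norm_num))
  have hu2 : ContDiff ℝ ((2:ℕ)) u := hu'.of_le (hcast (by norm_num))
  have hB0 : (0:ℝ) ≤ B := le_trans (norm_nonneg _) (hB6 p)
  -- E1 : x-direction
  have hgXbd : ∀ t, |iteratedDeriv 6 (fun x => u (x, p.2)) t| ≤ B := by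
    intro t
    rw [iter_secx 6 u hu' t p.2, iterate_pd_eq]
    exact pds_bound _ (fun v hv => by rw [List.eq_of_mem_replicate hv]; exact e1_norm)
      (by simpa using hu') (fun q => by simpa using hB6 q) _
  have hE1 : |Dx2 hx u p - iteratedDeriv 2 (fun x => u (x, p.2)) p.1
      - hx^2/12 * iteratedDeriv 4 (fun x => u (x, p.2)) p.1| ≤ B * hx^4/60 :=
    symA (secx_contDiff hu' p.2) hgXbd (c := p.1) hx0
  -- E2 : y-direction
  have hgYbd : ∀ t, |iteratedDeriv 6 (fun y => u (p.1, y)) t| ≤ B := by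
    intro t
    rw [iter_secy 6 u hu' p.1 t, iterate_pd_eq]
    exact pds_bound _ (fun v hv => by rw [List.eq_of_mem_replicate hv]; exact e2_norm)
      (by simpa using hu') (fun q => by simpa using hB6 q) _
  have hE2 : |Dy2 hy u p - iteratedDeriv 2 (fun y => u (p.1, y)) p.2
      - hy^2/12 * iteratedDeriv 4 (fun y => u (p.1, y)) p.2| ≤ B * hy^4/60 :=
    symA (secy_contDiff hu' p.1) hgYbd (c := p.2) hy0
  -- identify fourth derivatives with pds chains
  have hA4 : iteratedDeriv 4 (fun x => u (x, p.2)) p.1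
      = pds [((1:ℝ),(0:ℝ)), (1,0), (1,0), (1,0)] u p := by
    rw [iter_secx 4 u hu4 p.1 p.2]; rfl
  have hB4' : iteratedDeriv 4 (fun y => u (p.1, y)) p.2
      = pds [((0:ℝ),(1:ℝ)), (0,1), (0,1), (0,1)] u p := by
    rw [iter_secy 4 u hu4 p.1 p.2]; rfl
  rw [hA4] at hE1
  rw [hB4'] at hE2
  -- F0 : the Laplace equation at p
  have hF0 : f p = iteratedDeriv 2 (fun x => u (x, p.2)) p.1
      + iteratedDeriv 2 (fun y => u (p.1, y)) p.2 := by
    rw [iD2_eq, iD2_eq]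
    exact (hlap p).symm
  -- global representation of f
  have hfrepr : f = fun q => pds [((1:ℝ),(0:ℝ)), (1,0)] u q + pds [((0:ℝ),(1:ℝ)), (0,1)] u q := by
    funext q
    have h1 : deriv (fun x => deriv (fun x' => u (x', q.2)) x) q.1
        = pds [((1:ℝ),(0:ℝ)), (1,0)] u q := by
      show deriv (deriv (fun x' => u (x', q.2))) q.1 = _
      rw [← iD2_eq, iter_secx 2 u hu2 q.1 q.2]
      rfl
    have h2 : deriv (fun y => deriv (fun y' => u (q.1, y')) y) q.2
        = pds [((0:ℝ),(1:ℝ)), (0,1)] u q := by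
      show deriv (deriv (fun y' => u (q.1, y'))) q.2 = _
      rw [← iD2_eq, iter_secy 2 u hu2 q.1 q.2]
      rfl
    rw [← hlap q, h1, h2]
  -- Clairaut : X = Y
  have hXY : pds [((1:ℝ),(0:ℝ)), (1,0), (0,1), (0,1)] u
      = pds [((0:ℝ),(1:ℝ)), (0,1), (1,0), (1,0)] u := by
    have h1 : ContDiff ℝ ((2:ℕ)) (pd (0,1) u) := pd_contDiff (n := 2) hu3 _
    have h2 : ContDiff ℝ ((2:ℕ)) (pd (1,0) (pd (0,1) u)) :=
      pd_contDiff (n := 2) (pd_contDiff (n := 3) hu4 _) _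
    have h3 : ContDiff ℝ ((2:ℕ)) (pd (1,0) u) := pd_contDiff (n := 2) hu3 _
    show pd (1,0) (pd (1,0) (pd (0,1) (pd (0,1) u)))
        = pd (0,1) (pd (0,1) (pd (1,0) (pd (1,0) u)))
    rw [pd_comm h1 (1,0) (0,1), pd_comm h2 (1,0) (0,1), pd_comm hu2 (1,0) (0,1),
      pd_comm h3 (1,0) (0,1)]
  have hXYp : pds [((1:ℝ),(0:ℝ)), (1,0), (0,1), (0,1)] u p
      = pds [((0:ℝ),(1:ℝ)), (0,1), (1,0), (1,0)] u p := congrFun hXY p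
  -- cross term : Dc close to Y
  have hV4C2 : ContDiff ℝ ((2:ℕ)) (pds (List.replicate 4 ((1:ℝ),(0:ℝ))) u) :=
    pds_contDiff _ (by simpa using hu')
  have hV4bd : ∀ q, ‖iteratedFDeriv ℝ 2 (pds (List.replicate 4 ((1:ℝ),(0:ℝ))) u) q‖ ≤ B := by
    intro q
    refine le_trans (pds_norm_le (List.replicate 4 ((1:ℝ),(0:ℝ)))
      (fun v hv => by rw [List.eq_of_mem_replicate hv]; exact e1_norm) (k := 2)
      (by simpa using hu') q) ?_
    simpa using hB6 q
  have hV2C4 : ContDiff ℝ ((4:ℕ)) (pds (List.replicate 2 ((1:ℝ),(0:ℝ))) u) :=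
    pds_contDiff _ (by simpa using hu')
  have hV2C2 : ContDiff ℝ ((2:ℕ)) (pds (List.replicate 2 ((1:ℝ),(0:ℝ))) u) :=
    pds_contDiff _ (by simpa using hu4)
  have hV2bd : ∀ q, ‖iteratedFDeriv ℝ 4 (pds (List.replicate 2 ((1:ℝ),(0:ℝ))) u) q‖ ≤ B := by
    intro q
    refine le_trans (pds_norm_le (List.replicate 2 ((1:ℝ),(0:ℝ)))
      (fun v hv => by rw [List.eq_of_mem_replicate hv]; exact e1_norm) (k := 4)
      (by simpa using hu') q) ?_
    simpa using hB6 q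
  -- the section G of Dy2 u
  have hGbd : ∀ t, |iteratedDeriv 4 (fun x => Dy2 hy u (x, p.2)) t| ≤ 2 * B := by
    intro t
    have hGeq : iteratedDeriv 4 (fun x => Dy2 hy u (x, p.2)) t
        = iteratedDeriv 4 (fun x => ((fun x' => u (x', p.2 + hy)) x
            - 2 * (fun x' => u (x', p.2)) x + (fun x' => u (x', p.2 - hy)) x) / hy ^ 2) t := rfl
    rw [hGeq, iD_comb (secx_contDiff hu4 _) (secx_contDiff hu4 _) (secx_contDiff hu4 _)
      (hy^2) t, iter_secx 4 u hu4 t (p.2 + hy), iter_secx 4 u hu4 t p.2,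
      iter_secx 4 u hu4 t (p.2 - hy), iterate_pd_eq]
    have hsec2 : ∀ s, |iteratedDeriv 2
        (fun y => pds (List.replicate 4 ((1:ℝ),(0:ℝ))) u (t, y)) s| ≤ B := by
      intro s
      rw [iter_secy 2 _ hV4C2 t s, iterate_pd_eq]
      exact pds_bound _ (fun v hv => by rw [List.eq_of_mem_replicate hv]; exact e2_norm)
        (by simpa using hV4C2) (fun q => by simpa using hV4bd q) _
    exact symC (secy_contDiff hV4C2 t) hsec2 (c := p.2) hy0
  have hGC4 : ContDiff ℝ ((4:ℕ)) (fun x => Dy2 hy u (x, p.2)) := by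
    have hGeq : (fun x => Dy2 hy u (x, p.2))
        = fun x => (u (x, p.2 + hy) - 2 * u (x, p.2) + u (x, p.2 - hy)) / hy ^ 2 := rfl
    rw [hGeq]
    exact (((secx_contDiff hu4 (p.2 + hy)).sub
      (contDiff_const.mul (secx_contDiff hu4 p.2))).add
      (secx_contDiff hu4 (p.2 - hy))).div_const _
  have hstep1 : |Dx2 hx (Dy2 hy u) p
      - iteratedDeriv 2 (fun x => Dy2 hy u (x, p.2)) p.1| ≤ (2*B) * hx^2/3 :=
    symB hGC4 hGbd (c := p.1) hx0
  have hiD2G : iteratedDeriv 2 (fun x => Dy2 hy u (x, p.2)) p.1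
      = ((fun y => pds (List.replicate 2 ((1:ℝ),(0:ℝ))) u (p.1, y)) (p.2 + hy)
        - 2 * (fun y => pds (List.replicate 2 ((1:ℝ),(0:ℝ))) u (p.1, y)) p.2
        + (fun y => pds (List.replicate 2 ((1:ℝ),(0:ℝ))) u (p.1, y)) (p.2 - hy)) / hy ^ 2 := by
    have hGeq : iteratedDeriv 2 (fun x => Dy2 hy u (x, p.2)) p.1
        = iteratedDeriv 2 (fun x => ((fun x' => u (x', p.2 + hy)) x
            - 2 * (fun x' => u (x', p.2)) x + (fun x' => u (x', p.2 - hy)) x) / hy ^ 2) p.1 := rfl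
    rw [hGeq, iD_comb (secx_contDiff hu2 _) (secx_contDiff hu2 _) (secx_contDiff hu2 _)
      (hy^2) p.1, iter_secx 2 u hu2 p.1 (p.2 + hy), iter_secx 2 u hu2 p.1 p.2,
      iter_secx 2 u hu2 p.1 (p.2 - hy), iterate_pd_eq]
  have hsec4 : ∀ s, |iteratedDeriv 4
      (fun y => pds (List.replicate 2 ((1:ℝ),(0:ℝ))) u (p.1, y)) s| ≤ B := by
    intro s
    rw [iter_secy 4 _ hV2C4 p.1 s, iterate_pd_eq]
    exact pds_bound _ (fun v hv => by rw [List.eq_of_mem_replicate hv]; exact e2_norm)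
      (by simpa using hV2C4) (fun q => by simpa using hV2bd q) _
  have hstep2 := symB (secy_contDiff hV2C4 p.1) hsec4 (c := p.2) hy0
  have hYid : iteratedDeriv 2 (fun y => pds (List.replicate 2 ((1:ℝ),(0:ℝ))) u (p.1, y)) p.2
      = pds [((0:ℝ),(1:ℝ)), (0,1), (1,0), (1,0)] u p := by
    rw [iter_secy 2 _ hV2C2 p.1 p.2]
    rfl
  rw [hYid] at hstep2
  rw [← hiD2G] at hstep2
  have hDc : |Dx2 hx (Dy2 hy u) p - pds [((0:ℝ),(1:ℝ)), (0,1), (1,0), (1,0)] u p|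
      ≤ (2*B) * hx^2/3 + B * hy^2/3 := by
    calc |Dx2 hx (Dy2 hy u) p - pds [((0:ℝ),(1:ℝ)), (0,1), (1,0), (1,0)] u p|
        = |(Dx2 hx (Dy2 hy u) p - iteratedDeriv 2 (fun x => Dy2 hy u (x, p.2)) p.1)
          + (iteratedDeriv 2 (fun x => Dy2 hy u (x, p.2)) p.1
            - pds [((0:ℝ),(1:ℝ)), (0,1), (1,0), (1,0)] u p)| := by ring_nf
    _ ≤ _ := abs_add_le _ _
    _ ≤ (2*B) * hx^2/3 + B * hy^2/3 := add_le_add hstep1 hstep2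
  -- F1 : x second difference of f
  have hfXbd : ∀ t, |iteratedDeriv 4 (fun x => f (x, p.2)) t| ≤ B := by
    intro t
    rw [iter_secx 4 f hf' t p.2, iterate_pd_eq]
    exact pds_bound _ (fun v hv => by rw [List.eq_of_mem_replicate hv]; exact e1_norm)
      (by simpa using hf') (fun q => by simpa using hB4 q) _
  have hstep3 : |Dx2 hx f p - iteratedDeriv 2 (fun x => f (x, p.2)) p.1| ≤ B * hx^2/3 :=
    symB (secx_contDiff hf' p.2) hfXbd (c := p.1) hx0
  have hW2C2 : ContDiff ℝ ((2:ℕ)) (pds [((0:ℝ),(1:ℝ)), (0,1)] u) :=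
    pds_contDiff _ (by simpa using hu4)
  have hV2C2' : ContDiff ℝ ((2:ℕ)) (pds [((1:ℝ),(0:ℝ)), (1,0)] u) :=
    pds_contDiff _ (by simpa using hu4)
  have hiD2fX : iteratedDeriv 2 (fun x => f (x, p.2)) p.1
      = pds [((1:ℝ),(0:ℝ)), (1,0), (1,0), (1,0)] u p
        + pds [((1:ℝ),(0:ℝ)), (1,0), (0,1), (0,1)] u p := by
    have hsec : (fun x => f (x, p.2))
        = fun x => (fun x' => pds [((1:ℝ),(0:ℝ)), (1,0)] u (x', p.2)) x
          + (fun x' => pds [((0:ℝ),(1:ℝ)), (0,1)] u (x', p.2)) x := by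
      funext x
      rw [hfrepr]
    rw [hsec, iD_add (secx_contDiff hV2C2' p.2) (secx_contDiff hW2C2 p.2) p.1,
      iter_secx 2 _ hV2C2' p.1 p.2, iter_secx 2 _ hW2C2 p.1 p.2]
    rfl
  rw [hiD2fX] at hstep3
  -- F2 : y second difference of f
  have hfYbd : ∀ t, |iteratedDeriv 4 (fun y => f (p.1, y)) t| ≤ B := by
    intro t
    rw [iter_secy 4 f hf' p.1 t, iterate_pd_eq]
    exact pds_bound _ (fun v hv => by rw [List.eq_of_mem_replicate hv]; exact e2_norm)
      (by simpa using hf') (fun q => by simpa using hB4 q) _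
  have hstep4 : |Dy2 hy f p - iteratedDeriv 2 (fun y => f (p.1, y)) p.2| ≤ B * hy^2/3 :=
    symB (secy_contDiff hf' p.1) hfYbd (c := p.2) hy0
  have hiD2fY : iteratedDeriv 2 (fun y => f (p.1, y)) p.2
      = pds [((0:ℝ),(1:ℝ)), (0,1), (1,0), (1,0)] u p
        + pds [((0:ℝ),(1:ℝ)), (0,1), (0,1), (0,1)] u p := by
    have hsec : (fun y => f (p.1, y))
        = fun y => (fun y' => pds [((1:ℝ),(0:ℝ)), (1,0)] u (p.1, y')) y
          + (fun y' => pds [((0:ℝ),(1:ℝ)), (0,1)] u (p.1, y')) y := by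
      funext y
      rw [hfrepr]
    rw [hsec, iD_add (secy_contDiff hV2C2' p.1) (secy_contDiff hW2C2 p.1) p.2,
      iter_secy 2 _ hV2C2' p.1 p.2, iter_secy 2 _ hW2C2 p.1 p.2]
    rfl
  rw [hiD2fY] at hstep4
  -- assemble
  rw [hXYp] at hstep3
  have hinner : (Dx2 hx u p + Dy2 hy u p)
      + hx ^ 2 / 12 * Dx2 hx (Dy2 hy u) p
      + hy ^ 2 / 12 * Dx2 hx (Dy2 hy u) p
      - (f p + hx ^ 2 / 12 * Dx2 hx f p + hy ^ 2 / 12 * Dy2 hy f p)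
      = (Dx2 hx u p - iteratedDeriv 2 (fun x => u (x, p.2)) p.1
          - hx^2/12 * pds [((1:ℝ),(0:ℝ)), (1,0), (1,0), (1,0)] u p)
        + (Dy2 hy u p - iteratedDeriv 2 (fun y => u (p.1, y)) p.2
          - hy^2/12 * pds [((0:ℝ),(1:ℝ)), (0,1), (0,1), (0,1)] u p)
        + (hx^2/12 + hy^2/12) * (Dx2 hx (Dy2 hy u) p
          - pds [((0:ℝ),(1:ℝ)), (0,1), (1,0), (1,0)] u p)
        + (-(hx^2/12 * (Dx2 hx f p
          - (pds [((1:ℝ),(0:ℝ)), (1,0), (1,0), (1,0)] u p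
            + pds [((0:ℝ),(1:ℝ)), (0,1), (1,0), (1,0)] u p))))
        + (-(hy^2/12 * (Dy2 hy f p
          - (pds [((0:ℝ),(1:ℝ)), (0,1), (1,0), (1,0)] u p
            + pds [((0:ℝ),(1:ℝ)), (0,1), (0,1), (0,1)] u p)))) := by
    rw [hF0]
    ring
  rw [hinner]
  have tri : ∀ y1 y2 y3 y4 y5 : ℝ,
      |y1 + y2 + y3 + y4 + y5| ≤ |y1| + |y2| + |y3| + |y4| + |y5| := by
    intro y1 y2 y3 y4 y5
    calc |y1 + y2 + y3 + y4 + y5| ≤ |y1 + y2 + y3 + y4| + |y5| := abs_add_le _ _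
    _ ≤ (|y1 + y2 + y3| + |y4|) + |y5| := by linarith [abs_add_le (y1 + y2 + y3) y4]
    _ ≤ ((|y1 + y2| + |y3|) + |y4|) + |y5| :=
        by linarith [abs_add_le (y1 + y2) y3]
    _ ≤ (((|y1| + |y2|) + |y3|) + |y4|) + |y5| :=
        by linarith [abs_add_le y1 y2]
  have hax : (0:ℝ) ≤ hx^2/12 + hy^2/12 := by positivity
  have hax1 : (0:ℝ) ≤ hx^2/12 := by positivity
  have hax2 : (0:ℝ) ≤ hy^2/12 := by positivity
  have hxm : hx ≤ max hx hy := le_max_left _ _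
  have hym : hy ≤ max hx hy := le_max_right _ _
  calc |_ + _ + _ + _ + _| ≤ _ := tri _ _ _ _ _
  _ ≤ B * hx^4/60 + B * hy^4/60
      + (hx^2/12 + hy^2/12) * ((2*B) * hx^2/3 + B * hy^2/3)
      + hx^2/12 * (B * hx^2/3) + hy^2/12 * (B * hy^2/3) := by
    rw [abs_neg, abs_neg, abs_mul, abs_mul, abs_mul, abs_of_nonneg hax,
      abs_of_nonneg hax1, abs_of_nonneg hax2]
    exact add_le_add (add_le_add (add_le_add (add_le_add hE1 hE2)
      (mul_le_mul_of_nonneg_left hDc hax)) (mul_le_mul_of_nonneg_left hstep3 hax1))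
      (mul_le_mul_of_nonneg_left hstep4 hax2)
  _ ≤ 1 * max hx hy ^ 4 * B := by
    have p1 : B * hx^4 ≤ B * max hx hy ^ 4 :=
      mul_le_mul_of_nonneg_left (pow_le_pow_left₀ hx0.le hxm 4) hB0
    have p2 : B * hy^4 ≤ B * max hx hy ^ 4 :=
      mul_le_mul_of_nonneg_left (pow_le_pow_left₀ hy0.le hym 4) hB0
    have p3 : B * (hx^2 * hy^2) ≤ B * max hx hy ^ 4 := by
      have : hx^2 * hy^2 ≤ max hx hy ^ 2 * max hx hy ^ 2 :=
        mul_le_mul (pow_le_pow_left₀ hx0.le hxm 2) (pow_le_pow_left₀ hy0.le hym 2)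
          (by positivity) (by positivity)
      calc B * (hx^2 * hy^2) ≤ B * (max hx hy ^ 2 * max hx hy ^ 2) :=
            mul_le_mul_of_nonneg_left this hB0
      _ = B * max hx hy ^ 4 := by ring
    have h0 : (0:ℝ) ≤ B * max hx hy ^ 4 := by
      have : (0:ℝ) < max hx hy := lt_of_lt_of_le hx0 hxm
      positivity
    nlinarith [p1, p2, p3, h0]
end

section
/- If u is harmonic on ℝ² (Δu = 0) and C⁸ with bounded derivatives, then [Δ_h + (h_x²/12) D²_x D²_y + (h_y²/12) D²_x D²_y] u = O(|h|⁴); i.e., harmonic functions satisfy the fourth-order modified discrete Laplace equation up to O(|h|⁴). -/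
/-- Partial derivative in the first coordinate. -/
noncomputable def pdx (u : ℝ × ℝ → ℝ) : ℝ × ℝ → ℝ :=
  fun p => deriv (fun x => u (x, p.2)) p.1

/-- Partial derivative in the second coordinate. -/
noncomputable def pdy (u : ℝ × ℝ → ℝ) : ℝ × ℝ → ℝ :=
  fun p => deriv (fun y => u (p.1, y)) p.2

open Set


noncomputable def dop (v : ℝ × ℝ) (f : ℝ × ℝ → ℝ) : ℝ × ℝ → ℝ := fun p => fderiv ℝ f p v

lemma dop_contDiff {f : ℝ × ℝ → ℝ} {n : ℕ} (v : ℝ × ℝ) (hf : ContDiff ℝ (n + 1 : ℕ) f) :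
    ContDiff ℝ (n : ℕ) (dop v f) := by
  have h : ContDiff ℝ (n : ℕ) (fderiv ℝ f) := hf.fderiv_right (by norm_cast)
  exact h.clm_apply contDiff_const

lemma dop_iter_contDiff (v : ℝ × ℝ) : ∀ (j : ℕ) {n : ℕ} {f : ℝ × ℝ → ℝ},
    ContDiff ℝ ((n + j : ℕ)) f → ContDiff ℝ (n : ℕ) ((dop v)^[j] f) := by
  intro j
  induction j with
  | zero => intro n f hf; simpa using hf
  | succ j ih =>
    intro n f hf
    rw [Function.iterate_succ_apply]
    exact ih (dop_contDiff v (by rw [show n + j + 1 = n + (j+1) by ring]; exact hf))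

lemma dop_bound {f : ℝ × ℝ → ℝ} {n : ℕ} {B : ℝ} {v : ℝ × ℝ} (hv : ‖v‖ ≤ 1)
    (hf : ContDiff ℝ (n + 1 : ℕ) f)
    (hB : ∀ p, ‖iteratedFDeriv ℝ (n + 1) f p‖ ≤ B) (p : ℝ × ℝ) :
    ‖iteratedFDeriv ℝ n (dop v f) p‖ ≤ B := by
  have hfd : ContDiff ℝ (n : ℕ) (fderiv ℝ f) := hf.fderiv_right (by norm_cast)
  have e : iteratedFDeriv ℝ n (dop v f) p
      = (ContinuousLinearMap.apply ℝ ℝ v).compContinuousMultilinearMap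
          (iteratedFDeriv ℝ n (fderiv ℝ f) p) :=
    (ContinuousLinearMap.apply ℝ ℝ v).iteratedFDeriv_comp_left (x := p) hfd.contDiffAt le_rfl
  rw [e]
  have h1 : ‖ContinuousLinearMap.apply ℝ ℝ v‖ ≤ 1 := by
    apply ContinuousLinearMap.opNorm_le_bound _ zero_le_one
    intro L
    calc ‖L v‖ ≤ ‖L‖ * ‖v‖ := L.le_opNorm v
      _ ≤ 1 * ‖L‖ := by nlinarith [norm_nonneg L]
  have h2 : ‖iteratedFDeriv ℝ n (fderiv ℝ f) p‖ ≤ B := by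
    rw [norm_iteratedFDeriv_fderiv]; exact hB p
  calc ‖(ContinuousLinearMap.apply ℝ ℝ v).compContinuousMultilinearMap
          (iteratedFDeriv ℝ n (fderiv ℝ f) p)‖
      ≤ ‖ContinuousLinearMap.apply ℝ ℝ v‖ * ‖iteratedFDeriv ℝ n (fderiv ℝ f) p‖ :=
        ContinuousLinearMap.norm_compContinuousMultilinearMap_le _ _
    _ ≤ 1 * B := mul_le_mul h1 h2 (norm_nonneg _) zero_le_one
    _ = B := one_mul B

lemma dop_iter_bound {B : ℝ} {v : ℝ × ℝ} (hv : ‖v‖ ≤ 1) :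
    ∀ (j : ℕ) {n : ℕ} {f : ℝ × ℝ → ℝ}, ContDiff ℝ ((n + j : ℕ)) f →
      (∀ p, ‖iteratedFDeriv ℝ (n + j) f p‖ ≤ B) →
      ∀ p, ‖iteratedFDeriv ℝ n ((dop v)^[j] f) p‖ ≤ B := by
  intro j
  induction j with
  | zero => intro n f hf hB p; simpa using hB p
  | succ j ih =>
    intro n f hf hB p
    rw [Function.iterate_succ_apply]
    have hf' : ContDiff ℝ ((n + j + 1 : ℕ)) f := by
      rw [show n + j + 1 = n + (j+1) by ring]; exact hf
    have hB' : ∀ p, ‖iteratedFDeriv ℝ (n + j + 1) f p‖ ≤ B := by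
      intro p; rw [show n + j + 1 = n + (j+1) by ring]; exact hB p
    exact ih (dop_contDiff v hf') (dop_bound hv hf' hB') p

lemma chain_bound {u : ℝ × ℝ → ℝ} {B : ℝ} (hu : ContDiff ℝ 8 u)
    (hB : ∀ i ≤ 8, ∀ p : ℝ × ℝ, ‖iteratedFDeriv ℝ i u p‖ ≤ B)
    {v w : ℝ × ℝ} (hv : ‖v‖ ≤ 1) (hw : ‖w‖ ≤ 1) (a b : ℕ) (hab : a + b ≤ 8) (p : ℝ × ℝ) :
    |(dop w)^[a] ((dop v)^[b] u) p| ≤ B := by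
  have hu' : ContDiff ℝ ((a + b : ℕ)) u := hu.of_le (by exact_mod_cast hab)
  have h1 : ∀ p, ‖iteratedFDeriv ℝ (a + b) u p‖ ≤ B := fun p => hB (a + b) hab p
  have h2 : ∀ p, ‖iteratedFDeriv ℝ a ((dop v)^[b] u) p‖ ≤ B := dop_iter_bound hv b hu' h1
  have h3 : ContDiff ℝ (a : ℕ) ((dop v)^[b] u) := dop_iter_contDiff v b hu'
  have h4 : ∀ p, ‖iteratedFDeriv ℝ 0 ((dop w)^[a] ((dop v)^[b] u)) p‖ ≤ B := by
    apply dop_iter_bound hw a (n := 0)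
    · simp only [Nat.zero_add]; exact h3
    · intro q; show ‖iteratedFDeriv ℝ (0 + a) ((dop v)^[b] u) q‖ ≤ B
      rw [Nat.zero_add]; exact h2 q
  have := h4 p
  rwa [norm_iteratedFDeriv_zero, Real.norm_eq_abs] at this



lemma deriv_secx_s12 {f : ℝ × ℝ → ℝ} {a c : ℝ} (hf : DifferentiableAt ℝ f (a, c)) :
    deriv (fun x => f (x, c)) a = dop (1, 0) f (a, c) := by
  have h1 : HasDerivAt (fun x : ℝ => (x, c)) ((1 : ℝ), (0 : ℝ)) a :=
    (hasDerivAt_id a).prodMk (hasDerivAt_const a c)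
  have h2 := hf.hasFDerivAt.comp_hasDerivAt a h1
  exact h2.deriv

lemma deriv_secy_s12 {f : ℝ × ℝ → ℝ} {a c : ℝ} (hf : DifferentiableAt ℝ f (a, c)) :
    deriv (fun y => f (a, y)) c = dop (0, 1) f (a, c) := by
  have h1 : HasDerivAt (fun y : ℝ => (a, y)) ((0 : ℝ), (1 : ℝ)) c :=
    (hasDerivAt_const c a).prodMk (hasDerivAt_id c)
  have h2 := hf.hasFDerivAt.comp_hasDerivAt c h1
  exact h2.deriv

lemma pdx_eq {f : ℝ × ℝ → ℝ} (hf : Differentiable ℝ f) : pdx f = dop (1, 0) f := by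
  funext p
  have := deriv_secx_s12 (f := f) (a := p.1) (c := p.2) (hf _)
  simpa [pdx] using this

lemma pdy_eq {f : ℝ × ℝ → ℝ} (hf : Differentiable ℝ f) : pdy f = dop (0, 1) f := by
  funext p
  have := deriv_secy_s12 (f := f) (a := p.1) (c := p.2) (hf _)
  simpa [pdy] using this

lemma iteratedDeriv_secx {f : ℝ × ℝ → ℝ} {k : ℕ} (hf : ContDiff ℝ (k : ℕ) f) :
    ∀ j, j ≤ k → ∀ (c t : ℝ), iteratedDeriv j (fun x => f (x, c)) t = (dop (1, 0))^[j] f (t, c) := by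
  intro j
  induction j with
  | zero => intro _ c t; simp
  | succ j ih =>
    intro hj c t
    have hD : Differentiable ℝ ((dop (1, 0))^[j] f) := by
      have h1 : ContDiff ℝ ((1 : ℕ)) ((dop (1, 0))^[j] f) :=
        dop_iter_contDiff _ j (hf.of_le (by exact_mod_cast (by omega : 1 + j ≤ k)))
      exact h1.differentiable (by norm_cast)
    have hcongr : iteratedDeriv j (fun x => f (x, c)) = fun x => (dop (1, 0))^[j] f (x, c) :=
      funext fun x => ih (Nat.le_of_succ_le hj) c x
    rw [iteratedDeriv_succ, hcongr, deriv_secx_s12 (hD (t, c)), ← Function.iterate_succ_apply' (dop (1,0))]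

lemma iteratedDeriv_secy {f : ℝ × ℝ → ℝ} {k : ℕ} (hf : ContDiff ℝ (k : ℕ) f) :
    ∀ j, j ≤ k → ∀ (a t : ℝ), iteratedDeriv j (fun y => f (a, y)) t = (dop (0, 1))^[j] f (a, t) := by
  intro j
  induction j with
  | zero => intro _ a t; simp
  | succ j ih =>
    intro hj a t
    have hD : Differentiable ℝ ((dop (0, 1))^[j] f) := by
      have h1 : ContDiff ℝ ((1 : ℕ)) ((dop (0, 1))^[j] f) :=
        dop_iter_contDiff _ j (hf.of_le (by exact_mod_cast (by omega : 1 + j ≤ k)))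
      exact h1.differentiable (by norm_cast)
    have hcongr : iteratedDeriv j (fun y => f (a, y)) = fun y => (dop (0, 1))^[j] f (a, y) :=
      funext fun y => ih (Nat.le_of_succ_le hj) a y
    rw [iteratedDeriv_succ, hcongr, deriv_secy_s12 (hD (a, t)), ← Function.iterate_succ_apply' (dop (0,1))]



lemma iteratedDerivWithin_eq_iteratedDeriv' {g : ℝ → ℝ} {n m : ℕ} (hg : ContDiff ℝ (n : ℕ) g)
    (hm : m ≤ n) {s : Set ℝ} (hs : UniqueDiffOn ℝ s) {x : ℝ} (hx : x ∈ s) :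
    iteratedDerivWithin m g s x = iteratedDeriv m g x := by
  rw [iteratedDerivWithin_eq_iteratedFDerivWithin, iteratedDeriv_eq_iteratedFDeriv]
  congr 1
  have hT : HasFTaylorSeriesUpTo ((n : ℕ∞)) g (ftaylorSeries ℝ g) :=
    contDiff_iff_ftaylorSeries.mp (by exact_mod_cast hg)
  have := (hT.hasFTaylorSeriesUpToOn s).eq_iteratedFDerivWithin_of_uniqueDiffOn
    (by exact_mod_cast hm) hs hx
  rw [← this]
  rfl

lemma taylor_right {g : ℝ → ℝ} {n : ℕ} (hg : ContDiff ℝ (n + 1 : ℕ) g) {M : ℝ}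
    (hM : ∀ x, |iteratedDeriv (n + 1) g x| ≤ M) {t h : ℝ} (hh : 0 < h) :
    |g (t + h) - ∑ k ∈ Finset.range (n + 1), h ^ k / (k.factorial : ℝ) * iteratedDeriv k g t|
      ≤ M * h ^ (n + 1) / (n.factorial : ℝ) := by
  have hab : t ≤ t + h := by linarith
  have hlt : t < t + h := by linarith
  have hs : UniqueDiffOn ℝ (Icc t (t + h)) := uniqueDiffOn_Icc hlt
  have hW : ∀ m, m ≤ n + 1 → ∀ x ∈ Icc t (t + h),
      iteratedDerivWithin m g (Icc t (t + h)) x = iteratedDeriv m g x := fun m hm x hx =>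
    iteratedDerivWithin_eq_iteratedDeriv' hg hm hs hx
  have hbound := taylor_mean_remainder_bound (f := g) (a := t) (b := t + h) (x := t + h)
    (n := n) hab (hg.contDiffOn.of_le (by norm_cast)) (right_mem_Icc.mpr hab)
    (fun y hy => by rw [hW (n+1) le_rfl y hy]; simpa [Real.norm_eq_abs] using hM y)
  have hTE : taylorWithinEval g n (Icc t (t + h)) t (t + h)
      = ∑ k ∈ Finset.range (n + 1), h ^ k / (k.factorial : ℝ) * iteratedDeriv k g t := by
    rw [taylor_within_apply]
    refine Finset.sum_congr rfl fun k hk => ?_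
    rw [hW k (by have := Finset.mem_range.mp hk; omega)
        t (left_mem_Icc.mpr hab)]
    rw [smul_eq_mul, show t + h - t = h by ring]
    ring
  rw [hTE, Real.norm_eq_abs, show t + h - t = h by ring] at hbound
  exact hbound

lemma taylor_left {g : ℝ → ℝ} {n : ℕ} (hg : ContDiff ℝ (n + 1 : ℕ) g) {M : ℝ}
    (hM : ∀ x, |iteratedDeriv (n + 1) g x| ≤ M) {t h : ℝ} (hh : 0 < h) :
    |g (t - h) - ∑ k ∈ Finset.range (n + 1), (-h) ^ k / (k.factorial : ℝ) * iteratedDeriv k g t|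
      ≤ M * h ^ (n + 1) / (n.factorial : ℝ) := by
  set G : ℝ → ℝ := fun x => g (2 * t - x) with hGdef
  have hG : ContDiff ℝ (n + 1 : ℕ) G := hg.comp (contDiff_const.sub contDiff_id)
  have hGiter : ∀ (m : ℕ) (x : ℝ),
      iteratedDeriv m G x = (-1 : ℝ) ^ m * iteratedDeriv m g (2 * t - x) := by
    intro m x
    have h1 : G = fun x => (fun y => g (2 * t + y)) (-x) := by
      funext z; simp [hGdef, sub_eq_add_neg]
    rw [h1, iteratedDeriv_comp_neg m (fun y => g (2 * t + y)) x,
      iteratedDeriv_comp_const_add m g (2 * t)]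
    simp [sub_eq_add_neg, smul_eq_mul]
  have hMG : ∀ x, |iteratedDeriv (n + 1) G x| ≤ M := by
    intro x
    rw [hGiter]
    rw [abs_mul, abs_pow, abs_neg, abs_one, one_pow, one_mul]
    exact hM _
  have := taylor_right hG hMG (t := t) (h := h) hh
  have e1 : G (t + h) = g (t - h) := by simp [hGdef]; ring_nf
  have e2 : ∀ k, h ^ k / (k.factorial : ℝ) * iteratedDeriv k G t
      = (-h) ^ k / (k.factorial : ℝ) * iteratedDeriv k g t := by
    intro k
    rw [hGiter, show 2 * t - t = t by ring, neg_pow]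
    ring
  rw [e1] at this
  calc |g (t - h) - ∑ k ∈ Finset.range (n + 1), (-h) ^ k / (k.factorial : ℝ) * iteratedDeriv k g t|
      = |g (t - h) - ∑ k ∈ Finset.range (n + 1), h ^ k / (k.factorial : ℝ) * iteratedDeriv k G t| := by
        rw [Finset.sum_congr rfl fun k _ => e2 k]
    _ ≤ M * h ^ (n + 1) / (n.factorial : ℝ) := this

lemma sym5 {g : ℝ → ℝ} (hg : ContDiff ℝ ((6 : ℕ)) g) {M : ℝ}
    (hM : ∀ x, |iteratedDeriv 6 g x| ≤ M) {t h : ℝ} (hh : 0 < h) :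
    |g (t + h) - 2 * g t + g (t - h) - h ^ 2 * iteratedDeriv 2 g t
        - h ^ 4 / 12 * iteratedDeriv 4 g t| ≤ M * h ^ 6 / 60 := by
  have hg' : ContDiff ℝ ((5 : ℕ) + 1 : ℕ) g := by norm_num at hg ⊢; exact hg
  have hM' : ∀ x, |iteratedDeriv (5 + 1) g x| ≤ M := fun x => hM x
  have hp := taylor_right (n := 5) hg' hM' (t := t) (h := h) hh
  have hm := taylor_left (n := 5) hg' hM' (t := t) (h := h) hh
  set Sp := ∑ k ∈ Finset.range 6, h ^ k / (k.factorial : ℝ) * iteratedDeriv k g t with hSp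
  set Sm := ∑ k ∈ Finset.range 6, (-h) ^ k / (k.factorial : ℝ) * iteratedDeriv k g t with hSm
  have hsum : Sp + Sm = 2 * g t + h ^ 2 * iteratedDeriv 2 g t
      + h ^ 4 / 12 * iteratedDeriv 4 g t := by
    rw [hSp, hSm]
    simp [Finset.sum_range_succ, iteratedDeriv_zero, Nat.factorial]
    ring
  have key : g (t + h) - 2 * g t + g (t - h) - h ^ 2 * iteratedDeriv 2 g t
      - h ^ 4 / 12 * iteratedDeriv 4 g t = (g (t + h) - Sp) + (g (t - h) - Sm) := by
    linarith [hsum]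
  rw [key]
  have hfac : ((5 : ℕ).factorial : ℝ) = 120 := by norm_num [Nat.factorial]
  calc |g (t + h) - Sp + (g (t - h) - Sm)| ≤ |g (t + h) - Sp| + |g (t - h) - Sm| := abs_add_le _ _
    _ ≤ M * h ^ (5 + 1) / ((5 : ℕ).factorial : ℝ) + M * h ^ (5 + 1) / ((5 : ℕ).factorial : ℝ) :=
        add_le_add hp hm
    _ = M * h ^ 6 / 60 := by rw [hfac]; norm_num; ring

lemma sym3 {g : ℝ → ℝ} (hg : ContDiff ℝ ((4 : ℕ)) g) {M : ℝ}
    (hM : ∀ x, |iteratedDeriv 4 g x| ≤ M) {t h : ℝ} (hh : 0 < h) :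
    |g (t + h) - 2 * g t + g (t - h) - h ^ 2 * iteratedDeriv 2 g t| ≤ M * h ^ 4 / 3 := by
  have hg' : ContDiff ℝ ((3 : ℕ) + 1 : ℕ) g := by norm_num at hg ⊢; exact hg
  have hM' : ∀ x, |iteratedDeriv (3 + 1) g x| ≤ M := fun x => hM x
  have hp := taylor_right (n := 3) hg' hM' (t := t) (h := h) hh
  have hm := taylor_left (n := 3) hg' hM' (t := t) (h := h) hh
  set Sp := ∑ k ∈ Finset.range 4, h ^ k / (k.factorial : ℝ) * iteratedDeriv k g t with hSp
  set Sm := ∑ k ∈ Finset.range 4, (-h) ^ k / (k.factorial : ℝ) * iteratedDeriv k g t with hSm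
  have hsum : Sp + Sm = 2 * g t + h ^ 2 * iteratedDeriv 2 g t := by
    rw [hSp, hSm]
    simp [Finset.sum_range_succ, iteratedDeriv_zero, Nat.factorial]
    ring
  have key : g (t + h) - 2 * g t + g (t - h) - h ^ 2 * iteratedDeriv 2 g t
      = (g (t + h) - Sp) + (g (t - h) - Sm) := by linarith [hsum]
  rw [key]
  have hfac : ((3 : ℕ).factorial : ℝ) = 6 := by norm_num [Nat.factorial]
  calc |g (t + h) - Sp + (g (t - h) - Sm)| ≤ |g (t + h) - Sp| + |g (t - h) - Sm| := abs_add_le _ _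
    _ ≤ M * h ^ (3 + 1) / ((3 : ℕ).factorial : ℝ) + M * h ^ (3 + 1) / ((3 : ℕ).factorial : ℝ) :=
        add_le_add hp hm
    _ = M * h ^ 4 / 3 := by rw [hfac]; norm_num; ring

lemma sym1 {g : ℝ → ℝ} (hg : ContDiff ℝ ((2 : ℕ)) g) {M : ℝ}
    (hM : ∀ x, |iteratedDeriv 2 g x| ≤ M) {t h : ℝ} (hh : 0 < h) :
    |g (t + h) - 2 * g t + g (t - h)| ≤ 2 * M * h ^ 2 := by
  have hg' : ContDiff ℝ ((1 : ℕ) + 1 : ℕ) g := by norm_num at hg ⊢; exact hg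
  have hM' : ∀ x, |iteratedDeriv (1 + 1) g x| ≤ M := fun x => hM x
  have hp := taylor_right (n := 1) hg' hM' (t := t) (h := h) hh
  have hm := taylor_left (n := 1) hg' hM' (t := t) (h := h) hh
  set Sp := ∑ k ∈ Finset.range 2, h ^ k / (k.factorial : ℝ) * iteratedDeriv k g t with hSp
  set Sm := ∑ k ∈ Finset.range 2, (-h) ^ k / (k.factorial : ℝ) * iteratedDeriv k g t with hSm
  have hsum : Sp + Sm = 2 * g t := by
    rw [hSp, hSm]
    simp [Finset.sum_range_succ, iteratedDeriv_zero, Nat.factorial]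
    ring
  have key : g (t + h) - 2 * g t + g (t - h) = (g (t + h) - Sp) + (g (t - h) - Sm) := by
    linarith [hsum]
  rw [key]
  have hfac : ((1 : ℕ).factorial : ℝ) = 1 := by norm_num [Nat.factorial]
  calc |g (t + h) - Sp + (g (t - h) - Sm)| ≤ |g (t + h) - Sp| + |g (t - h) - Sm| := abs_add_le _ _
    _ ≤ M * h ^ (1 + 1) / ((1 : ℕ).factorial : ℝ) + M * h ^ (1 + 1) / ((1 : ℕ).factorial : ℝ) :=
        add_le_add hp hm
    _ = 2 * M * h ^ 2 := by rw [hfac]; norm_num; ring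
lemma Dx2_eq (h : ℝ) (f : ℝ × ℝ → ℝ) :
    Dx2 h f = fun p => (f (p + (h, 0)) - 2 * f p + f (p + (-h, 0))) / h ^ 2 := by
  funext p
  have e1 : (p.1 + h, p.2) = p + (h, 0) := by simp [Prod.ext_iff]
  have e2 : (p.1 - h, p.2) = p + (-h, 0) := by simp [Prod.ext_iff, sub_eq_add_neg]
  rw [Dx2, e1, e2]

lemma Dy2_eq (h : ℝ) (f : ℝ × ℝ → ℝ) :
    Dy2 h f = fun p => (f (p + (0, h)) - 2 * f p + f (p + (0, -h))) / h ^ 2 := by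
  funext p
  have e1 : (p.1, p.2 + h) = p + (0, h) := by simp [Prod.ext_iff]
  have e2 : (p.1, p.2 - h) = p + (0, -h) := by simp [Prod.ext_iff, sub_eq_add_neg]
  rw [Dy2, e1, e2]

lemma contDiff_Dx2 {f : ℝ × ℝ → ℝ} {n : WithTop ℕ∞} (hf : ContDiff ℝ n f) (h : ℝ) :
    ContDiff ℝ n (Dx2 h f) := by
  rw [Dx2_eq]
  exact (((hf.comp (contDiff_id.add contDiff_const)).sub (contDiff_const.mul hf)).add
    (hf.comp (contDiff_id.add contDiff_const))).div_const _

lemma contDiff_Dy2 {f : ℝ × ℝ → ℝ} {n : WithTop ℕ∞} (hf : ContDiff ℝ n f) (h : ℝ) :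
    ContDiff ℝ n (Dy2 h f) := by
  rw [Dy2_eq]
  exact (((hf.comp (contDiff_id.add contDiff_const)).sub (contDiff_const.mul hf)).add
    (hf.comp (contDiff_id.add contDiff_const))).div_const _

lemma hasFDerivAt_translate {f : ℝ × ℝ → ℝ} (hf : Differentiable ℝ f) (c p : ℝ × ℝ) :
    HasFDerivAt (fun q => f (q + c)) (fderiv ℝ f (p + c)) p := by
  have h1 : HasFDerivAt (fun q : ℝ × ℝ => q + c) (ContinuousLinearMap.id ℝ (ℝ × ℝ)) p :=
    (hasFDerivAt_id p).add_const c
  have h2 := ((hf (p + c)).hasFDerivAt).comp p h1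
  rw [ContinuousLinearMap.comp_id] at h2; exact h2

lemma dop_D2 {f : ℝ × ℝ → ℝ} (hf : Differentiable ℝ f) (v w : ℝ × ℝ) (h : ℝ) (p : ℝ × ℝ) :
    dop v (fun q => (f (q + w) - 2 * f q + f (q + (-w))) / h ^ 2) p
      = (dop v f (p + w) - 2 * dop v f p + dop v f (p + (-w))) / h ^ 2 := by
  have dA : DifferentiableAt ℝ (fun q => f (q + w)) p :=
    (hasFDerivAt_translate hf w p).differentiableAt
  have dC : DifferentiableAt ℝ (fun q => f (q + (-w))) p :=
    (hasFDerivAt_translate hf (-w) p).differentiableAt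
  have dB : DifferentiableAt ℝ f p := hf p
  show fderiv ℝ _ p v = _
  rw [show (fun q => (f (q + w) - 2 * f q + f (q + (-w))) / h ^ 2)
      = fun q => (h ^ 2)⁻¹ • (f (q + w) - 2 * f q + f (q + (-w))) from by
        funext q; rw [smul_eq_mul]; ring]
  rw [fderiv_fun_const_smul (f := fun q => f (q + w) - 2 * f q + f (q + (-w))) ((dA.sub (dB.const_mul 2)).add dC) ((h ^ 2)⁻¹),
      fderiv_fun_add (f := fun q => f (q + w) - 2 * f q) (g := fun q => f (q + (-w))) (dA.sub (dB.const_mul 2)) dC, fderiv_fun_sub (f := fun q => f (q + w)) (g := fun q => 2 * f q) dA (dB.const_mul 2),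
      fderiv_const_mul dB, (hasFDerivAt_translate hf w p).fderiv,
      (hasFDerivAt_translate hf (-w) p).fderiv]
  simp only [dop, ContinuousLinearMap.smul_apply, ContinuousLinearMap.add_apply,
    ContinuousLinearMap.sub_apply, smul_eq_mul]
  ring

lemma dop_Dy2 {f : ℝ × ℝ → ℝ} (hf : Differentiable ℝ f) (v : ℝ × ℝ) (h : ℝ) :
    dop v (Dy2 h f) = Dy2 h (dop v f) := by
  funext p
  conv_lhs => rw [Dy2_eq]
  conv_rhs => rw [Dy2_eq]
  have hneg : ((0 : ℝ), -h) = -(((0 : ℝ), h)) := by simp [Prod.ext_iff]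
  rw [hneg]
  exact dop_D2 hf v ((0 : ℝ), h) h p

lemma dop_Dx2 {f : ℝ × ℝ → ℝ} (hf : Differentiable ℝ f) (v : ℝ × ℝ) (h : ℝ) :
    dop v (Dx2 h f) = Dx2 h (dop v f) := by
  funext p
  conv_lhs => rw [Dx2_eq]
  conv_rhs => rw [Dx2_eq]
  have hneg : (-h, (0 : ℝ)) = -((h, (0 : ℝ))) := by simp [Prod.ext_iff]
  rw [hneg]
  exact dop_D2 hf v (h, (0 : ℝ)) h p

lemma dop_iter_Dy2 (v : ℝ × ℝ) (h : ℝ) : ∀ (j : ℕ) {f : ℝ × ℝ → ℝ}, ContDiff ℝ (j : ℕ) f →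
    (dop v)^[j] (Dy2 h f) = Dy2 h ((dop v)^[j] f) := by
  intro j
  induction j with
  | zero => intro f _; simp
  | succ j ih =>
    intro f hf
    have hdiff : Differentiable ℝ f := hf.differentiable (by simp)
    rw [Function.iterate_succ_apply, Function.iterate_succ_apply, dop_Dy2 hdiff]
    exact ih (dop_contDiff v (by exact_mod_cast hf))

lemma dop_iter_Dx2 (v : ℝ × ℝ) (h : ℝ) : ∀ (j : ℕ) {f : ℝ × ℝ → ℝ}, ContDiff ℝ (j : ℕ) f →
    (dop v)^[j] (Dx2 h f) = Dx2 h ((dop v)^[j] f) := by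
  intro j
  induction j with
  | zero => intro f _; simp
  | succ j ih =>
    intro f hf
    have hdiff : Differentiable ℝ f := hf.differentiable (by simp)
    rw [Function.iterate_succ_apply, Function.iterate_succ_apply, dop_Dx2 hdiff]
    exact ih (dop_contDiff v (by exact_mod_cast hf))

lemma Dx2_Dy2_comm (hx hy : ℝ) (f : ℝ × ℝ → ℝ) (p : ℝ × ℝ) :
    Dx2 hx (Dy2 hy f) p = Dy2 hy (Dx2 hx f) p := by
  simp only [Dx2, Dy2]
  ring
lemma EAx {f : ℝ × ℝ → ℝ} (hf : ContDiff ℝ ((6 : ℕ)) f) {M : ℝ}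
    (h6 : ∀ q, |(dop (1, 0))^[6] f q| ≤ M) {hx : ℝ} (hhx : 0 < hx) (p : ℝ × ℝ) :
    |Dx2 hx f p - (dop (1, 0))^[2] f p - hx ^ 2 / 12 * (dop (1, 0))^[4] f p|
      ≤ M * hx ^ 4 / 60 := by
  have hg : ContDiff ℝ ((6 : ℕ)) (fun x => f (x, p.2)) :=
    hf.comp (contDiff_id.prodMk contDiff_const)
  have hM : ∀ x, |iteratedDeriv 6 (fun x => f (x, p.2)) x| ≤ M := by
    intro x; rw [iteratedDeriv_secx hf 6 le_rfl]; exact h6 _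
  have hs := sym5 hg hM (t := p.1) (h := hx) hhx
  rw [iteratedDeriv_secx hf 2 (by norm_num), iteratedDeriv_secx hf 4 (by norm_num)] at hs
  simp only [Prod.mk.eta] at hs
  have key : Dx2 hx f p - (dop (1, 0))^[2] f p - hx ^ 2 / 12 * (dop (1, 0))^[4] f p
      = (f (p.1 + hx, p.2) - 2 * f p + f (p.1 - hx, p.2)
          - hx ^ 2 * (dop (1, 0))^[2] f p - hx ^ 4 / 12 * (dop (1, 0))^[4] f p) / hx ^ 2 := by
    rw [Dx2]; field_simp; try ring
  rw [key, abs_div, abs_of_pos (pow_pos hhx 2)]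
  calc _ ≤ (M * hx ^ 6 / 60) / hx ^ 2 := by gcongr
    _ = M * hx ^ 4 / 60 := by field_simp; try ring

lemma EAy {f : ℝ × ℝ → ℝ} (hf : ContDiff ℝ ((6 : ℕ)) f) {M : ℝ}
    (h6 : ∀ q, |(dop (0, 1))^[6] f q| ≤ M) {hy : ℝ} (hhy : 0 < hy) (p : ℝ × ℝ) :
    |Dy2 hy f p - (dop (0, 1))^[2] f p - hy ^ 2 / 12 * (dop (0, 1))^[4] f p|
      ≤ M * hy ^ 4 / 60 := by
  have hg : ContDiff ℝ ((6 : ℕ)) (fun y => f (p.1, y)) :=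
    hf.comp (contDiff_const.prodMk contDiff_id)
  have hM : ∀ x, |iteratedDeriv 6 (fun y => f (p.1, y)) x| ≤ M := by
    intro x; rw [iteratedDeriv_secy hf 6 le_rfl]; exact h6 _
  have hs := sym5 hg hM (t := p.2) (h := hy) hhy
  rw [iteratedDeriv_secy hf 2 (by norm_num), iteratedDeriv_secy hf 4 (by norm_num)] at hs
  simp only [Prod.mk.eta] at hs
  have key : Dy2 hy f p - (dop (0, 1))^[2] f p - hy ^ 2 / 12 * (dop (0, 1))^[4] f p
      = (f (p.1, p.2 + hy) - 2 * f p + f (p.1, p.2 - hy)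
          - hy ^ 2 * (dop (0, 1))^[2] f p - hy ^ 4 / 12 * (dop (0, 1))^[4] f p) / hy ^ 2 := by
    rw [Dy2]; field_simp; try ring
  rw [key, abs_div, abs_of_pos (pow_pos hhy 2)]
  calc _ ≤ (M * hy ^ 6 / 60) / hy ^ 2 := by gcongr
    _ = M * hy ^ 4 / 60 := by field_simp; try ring

lemma EBx {f : ℝ × ℝ → ℝ} (hf : ContDiff ℝ ((4 : ℕ)) f) {M : ℝ}
    (h4 : ∀ q, |(dop (1, 0))^[4] f q| ≤ M) {hx : ℝ} (hhx : 0 < hx) (p : ℝ × ℝ) :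
    |Dx2 hx f p - (dop (1, 0))^[2] f p| ≤ M * hx ^ 2 / 3 := by
  have hg : ContDiff ℝ ((4 : ℕ)) (fun x => f (x, p.2)) :=
    hf.comp (contDiff_id.prodMk contDiff_const)
  have hM : ∀ x, |iteratedDeriv 4 (fun x => f (x, p.2)) x| ≤ M := by
    intro x; rw [iteratedDeriv_secx hf 4 le_rfl]; exact h4 _
  have hs := sym3 hg hM (t := p.1) (h := hx) hhx
  rw [iteratedDeriv_secx hf 2 (by norm_num)] at hs
  simp only [Prod.mk.eta] at hs
  have key : Dx2 hx f p - (dop (1, 0))^[2] f p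
      = (f (p.1 + hx, p.2) - 2 * f p + f (p.1 - hx, p.2)
          - hx ^ 2 * (dop (1, 0))^[2] f p) / hx ^ 2 := by
    rw [Dx2]; field_simp; try ring
  rw [key, abs_div, abs_of_pos (pow_pos hhx 2)]
  calc _ ≤ (M * hx ^ 4 / 3) / hx ^ 2 := by gcongr
    _ = M * hx ^ 2 / 3 := by field_simp; try ring

lemma EBy {f : ℝ × ℝ → ℝ} (hf : ContDiff ℝ ((4 : ℕ)) f) {M : ℝ}
    (h4 : ∀ q, |(dop (0, 1))^[4] f q| ≤ M) {hy : ℝ} (hhy : 0 < hy) (p : ℝ × ℝ) :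
    |Dy2 hy f p - (dop (0, 1))^[2] f p| ≤ M * hy ^ 2 / 3 := by
  have hg : ContDiff ℝ ((4 : ℕ)) (fun y => f (p.1, y)) :=
    hf.comp (contDiff_const.prodMk contDiff_id)
  have hM : ∀ x, |iteratedDeriv 4 (fun y => f (p.1, y)) x| ≤ M := by
    intro x; rw [iteratedDeriv_secy hf 4 le_rfl]; exact h4 _
  have hs := sym3 hg hM (t := p.2) (h := hy) hhy
  rw [iteratedDeriv_secy hf 2 (by norm_num)] at hs
  simp only [Prod.mk.eta] at hs
  have key : Dy2 hy f p - (dop (0, 1))^[2] f p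
      = (f (p.1, p.2 + hy) - 2 * f p + f (p.1, p.2 - hy)
          - hy ^ 2 * (dop (0, 1))^[2] f p) / hy ^ 2 := by
    rw [Dy2]; field_simp; try ring
  rw [key, abs_div, abs_of_pos (pow_pos hhy 2)]
  calc _ ≤ (M * hy ^ 4 / 3) / hy ^ 2 := by gcongr
    _ = M * hy ^ 2 / 3 := by field_simp; try ring

lemma ECx {f : ℝ × ℝ → ℝ} (hf : ContDiff ℝ ((2 : ℕ)) f) {M : ℝ}
    (h2 : ∀ q, |(dop (1, 0))^[2] f q| ≤ M) {hx : ℝ} (hhx : 0 < hx) (p : ℝ × ℝ) :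
    |Dx2 hx f p| ≤ 2 * M := by
  have hg : ContDiff ℝ ((2 : ℕ)) (fun x => f (x, p.2)) :=
    hf.comp (contDiff_id.prodMk contDiff_const)
  have hM : ∀ x, |iteratedDeriv 2 (fun x => f (x, p.2)) x| ≤ M := by
    intro x; rw [iteratedDeriv_secx hf 2 le_rfl]; exact h2 _
  have hs := sym1 hg hM (t := p.1) (h := hx) hhx
  simp only [Prod.mk.eta] at hs
  have key : Dx2 hx f p
      = (f (p.1 + hx, p.2) - 2 * f p + f (p.1 - hx, p.2)) / hx ^ 2 := rfl
  rw [key, abs_div, abs_of_pos (pow_pos hhx 2)]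
  calc _ ≤ (2 * M * hx ^ 2) / hx ^ 2 := by gcongr
    _ = 2 * M := by field_simp; try ring

lemma ECy {f : ℝ × ℝ → ℝ} (hf : ContDiff ℝ ((2 : ℕ)) f) {M : ℝ}
    (h2 : ∀ q, |(dop (0, 1))^[2] f q| ≤ M) {hy : ℝ} (hhy : 0 < hy) (p : ℝ × ℝ) :
    |Dy2 hy f p| ≤ 2 * M := by
  have hg : ContDiff ℝ ((2 : ℕ)) (fun y => f (p.1, y)) :=
    hf.comp (contDiff_const.prodMk contDiff_id)
  have hM : ∀ x, |iteratedDeriv 2 (fun y => f (p.1, y)) x| ≤ M := by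
    intro x; rw [iteratedDeriv_secy hf 2 le_rfl]; exact h2 _
  have hs := sym1 hg hM (t := p.2) (h := hy) hhy
  simp only [Prod.mk.eta] at hs
  have key : Dy2 hy f p
      = (f (p.1, p.2 + hy) - 2 * f p + f (p.1, p.2 - hy)) / hy ^ 2 := rfl
  rw [key, abs_div, abs_of_pos (pow_pos hhy 2)]
  calc _ ≤ (2 * M * hy ^ 2) / hy ^ 2 := by gcongr
    _ = 2 * M := by field_simp; try ring

lemma dop_neg (v : ℝ × ℝ) (g : ℝ × ℝ → ℝ) :
    dop v (fun q => -(g q)) = fun q => -(dop v g q) := by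
  funext p
  simp [dop, fderiv_neg]

lemma dop_iter_neg (v : ℝ × ℝ) : ∀ (j : ℕ) (g : ℝ × ℝ → ℝ),
    (dop v)^[j] (fun q => -(g q)) = fun q => -((dop v)^[j] g q) := by
  intro j
  induction j with
  | zero => intro g; rfl
  | succ j ih =>
    intro g
    rw [Function.iterate_succ_apply, dop_neg, ih, Function.iterate_succ_apply]

set_option maxHeartbeats 1000000 in
/-- If `u ∈ C⁸(ℝ²)` is harmonic (`Δu = 0`) with bounded derivatives up to order
8, then `[Δ_h + (h_x²/12) D²_x D²_y + (h_y²/12) D²_x D²_y] u = O(|h|⁴)`: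
harmonic functions satisfy the fourth-order modified discrete Laplace equation
up to `O(|h|⁴)`. -/
theorem harmonic_modified_discrete_laplacian :
    ∃ C > 0, ∀ u : ℝ × ℝ → ℝ, ContDiff ℝ 8 u →
      (∀ p : ℝ × ℝ, pdx (pdx u) p + pdy (pdy u) p = 0) →
      ∀ B : ℝ, (∀ i ≤ 8, ∀ p : ℝ × ℝ, ‖iteratedFDeriv ℝ i u p‖ ≤ B) →
      ∀ hx hy : ℝ, 0 < hx → 0 < hy →
      ∀ p : ℝ × ℝ,
        |(Dx2 hx u p + Dy2 hy u p)
            + hx ^ 2 / 12 * Dx2 hx (Dy2 hy u) p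
            + hy ^ 2 / 12 * Dx2 hx (Dy2 hy u) p|
          ≤ C * max hx hy ^ 4 * B := by
  refine ⟨1, one_pos, ?_⟩
  intro u hu hharm B hB hx hy hhx hhy p
  have hne1 : ‖((1 : ℝ), (0 : ℝ))‖ ≤ 1 := by rw [Prod.norm_def]; norm_num
  have hne2 : ‖((0 : ℝ), (1 : ℝ))‖ ≤ 1 := by rw [Prod.norm_def]; norm_num
  have hB0 : 0 ≤ B := le_trans (norm_nonneg _) (hB 0 (by norm_num) p)
  have hu6 : ContDiff ℝ ((6 : ℕ)) u := hu.of_le (by norm_cast)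
  have hu4 : ContDiff ℝ ((4 : ℕ)) u := hu.of_le (by norm_cast)
  have hu2 : ContDiff ℝ ((2 : ℕ)) u := hu.of_le (by norm_cast)
  have hdiff : Differentiable ℝ u := hu.differentiable (by norm_num)
  -- chain bounds
  have b16 : ∀ q, |(dop (1, 0))^[6] u q| ≤ B := fun q => by
    simpa using chain_bound (v := ((1 : ℝ), (0 : ℝ))) (w := ((0 : ℝ), (1 : ℝ)))
      hu hB hne1 hne2 0 6 (by norm_num) q
  have b26 : ∀ q, |(dop (0, 1))^[6] u q| ≤ B := fun q => by
    simpa using chain_bound (v := ((0 : ℝ), (1 : ℝ))) (w := ((1 : ℝ), (0 : ℝ)))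
      hu hB hne2 hne1 0 6 (by norm_num) q
  have b24_12 : ∀ q, |(dop (0, 1))^[2] ((dop (1, 0))^[4] u) q| ≤ B := fun q =>
    chain_bound hu hB hne1 hne2 2 4 (by norm_num) q
  have b44 : ∀ q, |(dop (0, 1))^[4] ((dop (1, 0))^[2] u) q| ≤ B := fun q =>
    chain_bound hu hB hne1 hne2 4 2 (by norm_num) q
  have b12_24 : ∀ q, |(dop (1, 0))^[2] ((dop (0, 1))^[4] u) q| ≤ B := fun q =>
    chain_bound hu hB hne2 hne1 2 4 (by norm_num) q
  have b14_22 : ∀ q, |(dop (1, 0))^[4] ((dop (0, 1))^[2] u) q| ≤ B := fun q =>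
    chain_bound hu hB hne2 hne1 4 2 (by norm_num) q
  -- ContDiff of iterated derivatives
  have hd12 : ContDiff ℝ ((6 : ℕ)) ((dop (1, 0))^[2] u) :=
    dop_iter_contDiff _ 2 (hu.of_le (by norm_cast))
  have hd22 : ContDiff ℝ ((6 : ℕ)) ((dop (0, 1))^[2] u) :=
    dop_iter_contDiff _ 2 (hu.of_le (by norm_cast))
  have hd14 : ContDiff ℝ ((2 : ℕ)) ((dop (1, 0))^[4] u) :=
    dop_iter_contDiff _ 4 (hu.of_le (by norm_cast))
  have hd24 : ContDiff ℝ ((2 : ℕ)) ((dop (0, 1))^[4] u) :=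
    dop_iter_contDiff _ 4 (hu.of_le (by norm_cast))
  -- main one-direction estimates
  have E1 := EAx hu6 b16 hhx p
  have E2 := EAy hu6 b26 hhy p
  -- cross estimates, decomposition 1 : Dx2 (Dy2 u) ≈ d2² d1² u
  have hDyu4 : ContDiff ℝ ((4 : ℕ)) (Dy2 hy u) := contDiff_Dy2 hu4 hy
  have hM1 : ∀ q, |(dop (1, 0))^[4] (Dy2 hy u) q| ≤ 2 * B := by
    intro q
    rw [dop_iter_Dy2 (1, 0) hy 4 hu4]
    exact ECy hd14 b24_12 hhy q
  have E3a := EBx hDyu4 hM1 hhx p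
  have hcomm2 : (dop (1, 0))^[2] (Dy2 hy u) = Dy2 hy ((dop (1, 0))^[2] u) :=
    dop_iter_Dy2 (1, 0) hy 2 hu2
  have E3b := EBy (hd12.of_le (by norm_cast)) b44 hhy p
  have hcMy : |Dx2 hx (Dy2 hy u) p - (dop (0, 1))^[2] ((dop (1, 0))^[2] u) p|
      ≤ 2 * B * hx ^ 2 / 3 + B * hy ^ 2 / 3 := by
    rw [hcomm2] at E3a
    calc |Dx2 hx (Dy2 hy u) p - (dop (0, 1))^[2] ((dop (1, 0))^[2] u) p|
        ≤ |Dx2 hx (Dy2 hy u) p - Dy2 hy ((dop (1, 0))^[2] u) p|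
          + |Dy2 hy ((dop (1, 0))^[2] u) p - (dop (0, 1))^[2] ((dop (1, 0))^[2] u) p| :=
          abs_sub_le _ _ _
      _ ≤ 2 * B * hx ^ 2 / 3 + B * hy ^ 2 / 3 := add_le_add E3a E3b
  -- cross estimates, decomposition 2 : Dy2 (Dx2 u) ≈ d1² d2² u
  have hDxu4 : ContDiff ℝ ((4 : ℕ)) (Dx2 hx u) := contDiff_Dx2 hu4 hx
  have hM2 : ∀ q, |(dop (0, 1))^[4] (Dx2 hx u) q| ≤ 2 * B := by
    intro q
    rw [dop_iter_Dx2 (0, 1) hx 4 hu4]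
    exact ECx hd24 b12_24 hhx q
  have E4a := EBy hDxu4 hM2 hhy p
  have hcomm2' : (dop (0, 1))^[2] (Dx2 hx u) = Dx2 hx ((dop (0, 1))^[2] u) :=
    dop_iter_Dx2 (0, 1) hx 2 hu2
  have E4b := EBx (hd22.of_le (by norm_cast)) b14_22 hhx p
  have hcMx : |Dx2 hx (Dy2 hy u) p - (dop (1, 0))^[2] ((dop (0, 1))^[2] u) p|
      ≤ 2 * B * hy ^ 2 / 3 + B * hx ^ 2 / 3 := by
    rw [hcomm2'] at E4a
    rw [Dx2_Dy2_comm]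
    calc |Dy2 hy (Dx2 hx u) p - (dop (1, 0))^[2] ((dop (0, 1))^[2] u) p|
        ≤ |Dy2 hy (Dx2 hx u) p - Dx2 hx ((dop (0, 1))^[2] u) p|
          + |Dx2 hx ((dop (0, 1))^[2] u) p - (dop (1, 0))^[2] ((dop (0, 1))^[2] u) p| :=
          abs_sub_le _ _ _
      _ ≤ 2 * B * hy ^ 2 / 3 + B * hx ^ 2 / 3 := add_le_add E4a E4b
  -- harmonicity in dop form
  have hd1diff : Differentiable ℝ (dop (1, 0) u) :=
    (dop_contDiff (n := 1) (1, 0) (hu.of_le (by norm_cast))).differentiable (by norm_cast)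
  have hd2diff : Differentiable ℝ (dop (0, 1) u) :=
    (dop_contDiff (n := 1) (0, 1) (hu.of_le (by norm_cast))).differentiable (by norm_cast)
  have hit1 : (dop (1, 0))^[2] u = dop (1, 0) (dop (1, 0) u) := rfl
  have hit2 : (dop (0, 1))^[2] u = dop (0, 1) (dop (0, 1) u) := rfl
  have harm2 : ∀ q, (dop (1, 0))^[2] u q + (dop (0, 1))^[2] u q = 0 := by
    intro q
    have h1 : pdx (pdx u) = (dop (1, 0))^[2] u := by
      rw [pdx_eq hdiff, pdx_eq hd1diff, hit1]
    have h2 : pdy (pdy u) = (dop (0, 1))^[2] u := by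
      rw [pdy_eq hdiff, pdy_eq hd2diff, hit2]
    rw [← h1, ← h2]
    exact hharm q
  -- cancellation identities
  have hnegx : (dop (1, 0))^[2] u = fun q => -((dop (0, 1))^[2] u q) :=
    funext fun q => by linarith [harm2 q]
  have hnegy : (dop (0, 1))^[2] u = fun q => -((dop (1, 0))^[2] u q) :=
    funext fun q => by linarith [harm2 q]
  have hX4 : ∀ q, (dop (1, 0))^[4] u q = -((dop (1, 0))^[2] ((dop (0, 1))^[2] u) q) := by
    intro q
    have h44 : (dop (1, 0))^[4] u = (dop (1, 0))^[2] ((dop (1, 0))^[2] u) :=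
      Function.iterate_add_apply (dop (1, 0)) 2 2 u
    rw [h44, hnegx, dop_iter_neg]
  have hY4 : ∀ q, (dop (0, 1))^[4] u q = -((dop (0, 1))^[2] ((dop (1, 0))^[2] u) q) := by
    intro q
    have h44 : (dop (0, 1))^[4] u = (dop (0, 1))^[2] ((dop (0, 1))^[2] u) :=
      Function.iterate_add_apply (dop (0, 1)) 2 2 u
    rw [h44, hnegy, dop_iter_neg]
  -- final assembly
  set H := max hx hy with hH
  have hxH : hx ≤ H := le_max_left _ _
  have hyH : hy ≤ H := le_max_right _ _
  set a1 := Dx2 hx u p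
  set a2 := Dy2 hy u p
  set c := Dx2 hx (Dy2 hy u) p
  set T1 := (dop (1, 0))^[2] u p
  set T2 := (dop (0, 1))^[2] u p
  set X4 := (dop (1, 0))^[4] u p
  set Y4 := (dop (0, 1))^[4] u p
  set Mx := (dop (1, 0))^[2] ((dop (0, 1))^[2] u) p
  set My := (dop (0, 1))^[2] ((dop (1, 0))^[2] u) p
  have hT : T1 + T2 = 0 := harm2 p
  have hXM : X4 = -Mx := hX4 p
  have hYM : Y4 = -My := hY4 p
  have decomp : a1 + a2 + hx ^ 2 / 12 * c + hy ^ 2 / 12 * c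
      = (a1 - T1 - hx ^ 2 / 12 * X4) + (a2 - T2 - hy ^ 2 / 12 * Y4)
        + hx ^ 2 / 12 * (c - Mx) + hy ^ 2 / 12 * (c - My) := by
    have e1 : X4 + Mx = 0 := by rw [hXM]; ring
    have e2 : Y4 + My = 0 := by rw [hYM]; ring
    nlinarith [hT, e1, e2, sq_nonneg hx, sq_nonneg hy]
  rw [decomp]
  have habs : |(a1 - T1 - hx ^ 2 / 12 * X4) + (a2 - T2 - hy ^ 2 / 12 * Y4)
        + hx ^ 2 / 12 * (c - Mx) + hy ^ 2 / 12 * (c - My)|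
      ≤ |a1 - T1 - hx ^ 2 / 12 * X4| + |a2 - T2 - hy ^ 2 / 12 * Y4|
        + hx ^ 2 / 12 * |c - Mx| + hy ^ 2 / 12 * |c - My| := by
    have t1 := abs_add_le ((a1 - T1 - hx ^ 2 / 12 * X4) + (a2 - T2 - hy ^ 2 / 12 * Y4)
        + hx ^ 2 / 12 * (c - Mx)) (hy ^ 2 / 12 * (c - My))
    have t2 := abs_add_le ((a1 - T1 - hx ^ 2 / 12 * X4) + (a2 - T2 - hy ^ 2 / 12 * Y4))
        (hx ^ 2 / 12 * (c - Mx))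
    have t3 := abs_add_le (a1 - T1 - hx ^ 2 / 12 * X4) (a2 - T2 - hy ^ 2 / 12 * Y4)
    have m1 : |hx ^ 2 / 12 * (c - Mx)| = hx ^ 2 / 12 * |c - Mx| := by
      rw [abs_mul, abs_of_nonneg (by positivity : (0:ℝ) ≤ hx ^ 2 / 12)]
    have m2 : |hy ^ 2 / 12 * (c - My)| = hy ^ 2 / 12 * |c - My| := by
      rw [abs_mul, abs_of_nonneg (by positivity : (0:ℝ) ≤ hy ^ 2 / 12)]
    linarith
  have pow2x : hx ^ 2 ≤ H ^ 2 := pow_le_pow_left₀ (le_of_lt hhx) hxH 2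
  have pow2y : hy ^ 2 ≤ H ^ 2 := pow_le_pow_left₀ (le_of_lt hhy) hyH 2
  have pow4x : hx ^ 4 ≤ H ^ 4 := pow_le_pow_left₀ (le_of_lt hhx) hxH 4
  have pow4y : hy ^ 4 ≤ H ^ 4 := pow_le_pow_left₀ (le_of_lt hhy) hyH 4
  have powxy : hx ^ 2 * hy ^ 2 ≤ H ^ 4 := by
    have : H ^ 4 = H ^ 2 * H ^ 2 := by ring
    rw [this]
    exact mul_le_mul pow2x pow2y (by positivity) (by positivity)
  have hHpos : 0 < H := lt_of_lt_of_le hhx hxH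
  calc |(a1 - T1 - hx ^ 2 / 12 * X4) + (a2 - T2 - hy ^ 2 / 12 * Y4)
        + hx ^ 2 / 12 * (c - Mx) + hy ^ 2 / 12 * (c - My)|
      ≤ |a1 - T1 - hx ^ 2 / 12 * X4| + |a2 - T2 - hy ^ 2 / 12 * Y4|
        + hx ^ 2 / 12 * |c - Mx| + hy ^ 2 / 12 * |c - My| := habs
    _ ≤ B * hx ^ 4 / 60 + B * hy ^ 4 / 60
        + hx ^ 2 / 12 * (2 * B * hy ^ 2 / 3 + B * hx ^ 2 / 3)
        + hy ^ 2 / 12 * (2 * B * hx ^ 2 / 3 + B * hy ^ 2 / 3) := by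
      gcongr
    _ ≤ 1 * H ^ 4 * B := by
      have key0 : 0 ≤ B * H ^ 4 := mul_nonneg hB0 (by positivity)
      nlinarith [mul_le_mul_of_nonneg_left pow4x hB0,
        mul_le_mul_of_nonneg_left pow4y hB0, mul_le_mul_of_nonneg_left powxy hB0]
end

section
/- For a C^{2m+2} function f : [0,1] → ℝ all of whose derivatives up to order 2m+1 vanish at 0 and 1, the trapezoidal rule with uniform mesh h = 1/M satisfies |h ∑_{i=0}^{M} '' f(i h) - ∫_0^1 f(x) dx| ≤ C h^{2m+2} sup |f^{(2m+2)}|, where the double prime denotes halving the endpoint terms (which vanish here). -/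
open Set intervalIntegral

noncomputable def bpoly (n : ℕ) : ℝ → ℝ :=
  fun t => ((Polynomial.bernoulli n).map (algebraMap ℚ ℝ)).eval t / n.factorial

lemma bpoly_continuous (n : ℕ) : Continuous (bpoly n) :=
  (((Polynomial.bernoulli n).map (algebraMap ℚ ℝ)).continuous).div_const _

lemma hasDerivAt_bpoly (n : ℕ) (t : ℝ) :
    HasDerivAt (bpoly (n + 1)) (bpoly n t) t := by
  have h1 : HasDerivAt (fun x => ((Polynomial.bernoulli (n+1)).map (algebraMap ℚ ℝ)).eval x)
      ((((Polynomial.bernoulli (n+1)).map (algebraMap ℚ ℝ)).derivative).eval t) t :=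
    Polynomial.hasDerivAt _ t
  have h2 : ((((Polynomial.bernoulli (n+1)).map (algebraMap ℚ ℝ)).derivative)).eval t
      = ((n : ℝ) + 1) * ((Polynomial.bernoulli n).map (algebraMap ℚ ℝ)).eval t := by
    rw [Polynomial.derivative_map, Polynomial.derivative_bernoulli_add_one,
      Polynomial.map_mul]
    simp
  rw [h2] at h1
  have h3 := h1.div_const (((n+1).factorial : ℝ))
  have h4 : (((n : ℝ) + 1) * ((Polynomial.bernoulli n).map (algebraMap ℚ ℝ)).eval t) /
      (((n+1).factorial : ℝ)) = bpoly n t := by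
    unfold bpoly
    rw [Nat.factorial_succ]
    have hn : (n.factorial : ℝ) ≠ 0 := by positivity
    push_cast
    field_simp
  rw [h4] at h3
  exact h3

lemma bpoly_one (t : ℝ) : bpoly 1 t = t - 1/2 := by
  rw [bpoly, Polynomial.bernoulli]
  rw [Polynomial.eval_map]
  simp [Finset.sum_range_succ, bernoulli_one]
  ring

lemma bpoly_endpoint (n : ℕ) (hn : n ≠ 1) : bpoly n 1 = bpoly n 0 := by
  unfold bpoly
  rw [Polynomial.eval_one_map, Polynomial.eval_zero_map,
    Polynomial.bernoulli_eval_one, Polynomial.bernoulli_eval_zero,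
    bernoulli_eq_bernoulli'_of_ne_one hn]

open Finset in
lemma key_identity (M : ℕ) (hM : 1 ≤ M) (N : ℕ) (f : ℝ → ℝ) (hf : ContDiff ℝ (N : ℕ∞) f)
    (hvan : ∀ i, 1 ≤ i → i < N → iteratedDeriv i f 0 = 0 ∧ iteratedDeriv i f 1 = 0) :
    ∀ n, 1 ≤ n → n ≤ N →
      ((1/(M:ℝ)) * ∑ i ∈ range (M+1), f (i * (1/(M:ℝ))) - (1/(M:ℝ))/2 * (f 0 + f 1))
          - ∫ x in (0:ℝ)..1, f x
        = (-1)^(n+1) * ∑ i ∈ range M, ∫ x in ((i:ℝ)*(1/(M:ℝ)))..(((i:ℝ)+1)*(1/(M:ℝ))),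
            (1/(M:ℝ))^n * bpoly n ((x - (i:ℝ)*(1/(M:ℝ))) * M) * iteratedDeriv n f x := by
  have hM0 : (M:ℝ) ≠ 0 := Nat.cast_ne_zero.mpr (by omega)
  have hone : ((M:ℕ):ℝ) * (1/(M:ℝ)) = 1 := by field_simp
  have hcont : ∀ k : ℕ, k ≤ N → Continuous (iteratedDeriv k f) := fun k hk =>
    hf.continuous_iteratedDeriv k (by exact_mod_cast hk)
  have hderiv : ∀ k : ℕ, k < N → ∀ x : ℝ,
      HasDerivAt (iteratedDeriv k f) (iteratedDeriv (k+1) f x) x := by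
    intro k hk x
    have hd : DifferentiableAt ℝ (iteratedDeriv k f) x :=
      (hf.differentiable_iteratedDeriv k (by exact_mod_cast hk)).differentiableAt
    simpa [iteratedDeriv_succ] using hd.hasDerivAt
  intro n hn1
  induction n, hn1 using Nat.le_induction with
  | base =>
    intro hnN
    have hstep : ∀ i : ℕ, i < M →
        (∫ x in ((i:ℝ)*(1/(M:ℝ)))..(((i:ℝ)+1)*(1/(M:ℝ))),
            (1/(M:ℝ))^1 * bpoly 1 ((x - (i:ℝ)*(1/(M:ℝ))) * M) * iteratedDeriv 1 f x)
          = (1/(M:ℝ))/2 * (f (((i:ℝ)+1)*(1/(M:ℝ))) + f ((i:ℝ)*(1/(M:ℝ))))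
            - ∫ x in ((i:ℝ)*(1/(M:ℝ)))..(((i:ℝ)+1)*(1/(M:ℝ))), f x := by
      intro i hi
      set a : ℝ := (i:ℝ)*(1/(M:ℝ)) with ha
      set b : ℝ := ((i:ℝ)+1)*(1/(M:ℝ)) with hb
      have hu : ∀ x ∈ uIcc a b, HasDerivAt (fun y => y - (a + (1/(M:ℝ))/2)) (1:ℝ) x :=
        fun x _ => (hasDerivAt_id x).sub_const _
      have hv : ∀ x ∈ uIcc a b, HasDerivAt f (iteratedDeriv 1 f x) x := by
        intro x _
        simpa [iteratedDeriv_zero] using hderiv 0 (by omega) x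
      have hu' : IntervalIntegrable (fun _ => (1:ℝ)) MeasureTheory.volume a b :=
        intervalIntegrable_const
      have hv' : IntervalIntegrable (iteratedDeriv 1 f) MeasureTheory.volume a b :=
        (hcont 1 hnN).intervalIntegrable a b
      have hparts := intervalIntegral.integral_mul_deriv_eq_deriv_mul hu hv hu' hv'
      have hintegrand : ∀ x : ℝ,
          (1/(M:ℝ))^1 * bpoly 1 ((x - a) * M) * iteratedDeriv 1 f x
            = (x - (a + (1/(M:ℝ))/2)) * iteratedDeriv 1 f x := by
        intro x
        rw [bpoly_one]
        have : (1/(M:ℝ))^1 * ((x - a) * M - 1/2) = x - (a + (1/(M:ℝ))/2) := by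
          field_simp
          ring
        rw [this]
      rw [intervalIntegral.integral_congr (fun x _ => hintegrand x), hparts]
      have hba : b - (a + (1/(M:ℝ))/2) = (1/(M:ℝ))/2 := by
        rw [ha, hb]; ring
      have haa : a - (a + (1/(M:ℝ))/2) = -((1/(M:ℝ))/2) := by ring
      rw [hba, haa]
      simp only [one_mul]
      ring
    have hadj : ∑ i ∈ range M, (∫ x in ((i:ℝ)*(1/(M:ℝ)))..(((i:ℝ)+1)*(1/(M:ℝ))), f x)
        = ∫ x in (0:ℝ)..1, f x := by
      have := intervalIntegral.sum_integral_adjacent_intervals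
        (a := fun k : ℕ => (k:ℝ)*(1/(M:ℝ))) (μ := MeasureTheory.volume) (f := f) (n := M)
        (fun k _ => (hf.continuous.intervalIntegrable _ _))
      push_cast at this
      rw [this]
      norm_num [one_div, mul_inv_cancel₀ hM0]
    have e1 : ∑ i ∈ range M, f (((i:ℝ)+1)*(1/(M:ℝ)))
        = (∑ i ∈ range (M+1), f ((i:ℝ)*(1/(M:ℝ)))) - f 0 := by
      rw [Finset.sum_range_succ']
      push_cast
      simp
    have e2 : ∑ i ∈ range M, f ((i:ℝ)*(1/(M:ℝ)))
        = (∑ i ∈ range (M+1), f ((i:ℝ)*(1/(M:ℝ)))) - f 1 := by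
      rw [Finset.sum_range_succ, hone]
      ring
    rw [Finset.sum_congr rfl (fun i hi => hstep i (mem_range.mp hi))]
    rw [Finset.sum_sub_distrib, hadj]
    simp only [mul_add]
    rw [Finset.sum_add_distrib, ← Finset.mul_sum, ← Finset.mul_sum, e1, e2]
    norm_num
    ring
  | succ n hn ih =>
    intro hnN
    have ihh := ih (by omega)
    set β : ℝ := (1/(M:ℝ))^(n+1) * bpoly (n+1) 1 with hβ
    have hstep : ∀ i : ℕ, i < M →
        (∫ x in ((i:ℝ)*(1/(M:ℝ)))..(((i:ℝ)+1)*(1/(M:ℝ))),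
            (1/(M:ℝ))^n * bpoly n ((x - (i:ℝ)*(1/(M:ℝ))) * M) * iteratedDeriv n f x)
          = (β * iteratedDeriv n f (((i:ℝ)+1)*(1/(M:ℝ)))
              - β * iteratedDeriv n f ((i:ℝ)*(1/(M:ℝ))))
            - ∫ x in ((i:ℝ)*(1/(M:ℝ)))..(((i:ℝ)+1)*(1/(M:ℝ))),
                (1/(M:ℝ))^(n+1) * bpoly (n+1) ((x - (i:ℝ)*(1/(M:ℝ))) * M)
                  * iteratedDeriv (n+1) f x := by
      intro i hi
      set a : ℝ := (i:ℝ)*(1/(M:ℝ)) with ha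
      set b : ℝ := ((i:ℝ)+1)*(1/(M:ℝ)) with hb
      have hu : ∀ x ∈ uIcc a b, HasDerivAt (fun y => (1/(M:ℝ))^(n+1) * bpoly (n+1) ((y - a) * M))
          ((1/(M:ℝ))^n * bpoly n ((x - a) * M)) x := by
        intro x _
        have hinner : HasDerivAt (fun y : ℝ => (y - a) * (M:ℝ)) ((M:ℝ)) x := by
          simpa using ((hasDerivAt_id x).sub_const a).mul_const (M:ℝ)
        have hcomp := (hasDerivAt_bpoly n ((x - a) * M)).comp x hinner
        have h5 := hcomp.const_mul ((1/(M:ℝ))^(n+1))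
        have hval : (1/(M:ℝ))^(n+1) * (bpoly n ((x - a) * M) * (M:ℝ))
            = (1/(M:ℝ))^n * bpoly n ((x - a) * M) := by
          rw [pow_succ]
          field_simp
        rw [← hval]
        simpa [Function.comp_def] using h5
      have hv : ∀ x ∈ uIcc a b, HasDerivAt (iteratedDeriv n f) (iteratedDeriv (n+1) f x) x :=
        fun x _ => hderiv n (by omega) x
      have hu' : IntervalIntegrable (fun x => (1/(M:ℝ))^n * bpoly n ((x - a) * M))
          MeasureTheory.volume a b := by
        apply Continuous.intervalIntegrable
        exact continuous_const.mul ((bpoly_continuous n).comp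
          ((continuous_id.sub continuous_const).mul continuous_const))
      have hv' : IntervalIntegrable (iteratedDeriv (n+1) f) MeasureTheory.volume a b :=
        (hcont (n+1) hnN).intervalIntegrable a b
      have hparts := intervalIntegral.integral_mul_deriv_eq_deriv_mul hu hv hu' hv'
      have hba : (b - a) * (M:ℝ) = 1 := by
        rw [ha, hb]
        field_simp
        ring
      have haa : (a - a) * (M:ℝ) = 0 := by ring
      rw [hba, haa, bpoly_endpoint (n+1) (by omega)] at hparts
      -- hparts : ∫ u * v' = (1/M)^(n+1) * bpoly (n+1) 0 * v b - ... - ∫ u' * v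
      rw [← bpoly_endpoint (n+1) (by omega)] at hparts
      rw [hβ]
      linarith [hparts]
    rw [Finset.sum_congr rfl (fun i hi => hstep i (mem_range.mp hi))] at ihh
    rw [Finset.sum_sub_distrib] at ihh
    have htel : ∑ i ∈ range M,
        (β * iteratedDeriv n f (((i:ℝ)+1)*(1/(M:ℝ)))
          - β * iteratedDeriv n f ((i:ℝ)*(1/(M:ℝ)))) = 0 := by
      have hts := Finset.sum_range_sub
        (f := fun k : ℕ => β * iteratedDeriv n f ((k:ℝ)*(1/(M:ℝ)))) M
      push_cast at hts
      rw [hts]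
      have h0 : (0:ℝ) * (1/(M:ℝ)) = 0 := by ring
      rw [hone, h0]
      rw [(hvan n (by omega) (by omega)).1, (hvan n (by omega) (by omega)).2]
      ring
    rw [htel] at ihh
    rw [ihh]
    ring

/-- Euler–Maclaurin error bound: for `f ∈ C^{2m+2}([0,1])` whose derivatives up to
order `2m+1` vanish at `0` and `1`, the uniform trapezoidal rule with mesh
`h = 1/M` (endpoint terms halved; they vanish here) has error at most
`C h^{2m+2} sup_{[0,1]} |f^{(2m+2)}|`, with `C` depending only on `m`. -/
theorem trapezoidal_euler_maclaurin (m : ℕ) :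
    ∃ C > 0, ∀ M : ℕ, 1 ≤ M → ∀ f : ℝ → ℝ, ContDiff ℝ (2 * m + 2) f →
      (∀ i ≤ 2 * m + 1, iteratedDeriv i f 0 = 0 ∧ iteratedDeriv i f 1 = 0) →
      ∀ B : ℝ, (∀ x ∈ Icc (0 : ℝ) 1, |iteratedDeriv (2 * m + 2) f x| ≤ B) →
      ∀ h : ℝ, h = 1 / M →
        |(h * ∑ i ∈ Finset.range (M + 1), f (i * h) - h / 2 * (f 0 + f 1))
            - ∫ x in (0 : ℝ)..1, f x|
          ≤ C * h ^ (2 * m + 2) * B := by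
  obtain ⟨z, hz, hzmax⟩ := isCompact_Icc.exists_isMaxOn (s := Icc (0:ℝ) 1)
    (nonempty_Icc.mpr zero_le_one)
    ((bpoly_continuous (2*m+2)).abs.continuousOn)
  refine ⟨|bpoly (2*m+2) z| + 1, by positivity, ?_⟩
  intro M hM f hf hvan B hB h hh
  subst hh
  have hM0 : (M:ℝ) ≠ 0 := Nat.cast_ne_zero.mpr (by omega)
  have hMpos : (0:ℝ) < M := Nat.cast_pos.mpr hM
  have hf' : ContDiff ℝ ((2*m+2 : ℕ) : ℕ∞) f := by exact_mod_cast hf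
  have hvan' : ∀ i, 1 ≤ i → i < 2*m+2 →
      iteratedDeriv i f 0 = 0 ∧ iteratedDeriv i f 1 = 0 :=
    fun i _ hi => hvan i (by omega)
  have hkey := key_identity M hM (2*m+2) f hf' hvan' (2*m+2) (by omega) le_rfl
  rw [hkey, abs_mul, abs_pow, abs_neg, abs_one, one_pow, one_mul]
  have hB0 : 0 ≤ B := le_trans (abs_nonneg _) (hB 0 ⟨le_refl 0, zero_le_one⟩)
  have hper : ∀ i ∈ Finset.range M,
      |∫ x in ((i:ℝ)*(1/(M:ℝ)))..(((i:ℝ)+1)*(1/(M:ℝ))),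
          (1/(M:ℝ))^(2*m+2) * bpoly (2*m+2) ((x - (i:ℝ)*(1/(M:ℝ))) * M)
            * iteratedDeriv (2*m+2) f x|
        ≤ ((1/(M:ℝ))^(2*m+2) * |bpoly (2*m+2) z| * B) * (1/(M:ℝ)) := by
    intro i hi
    have hi' := Finset.mem_range.mp hi
    have hab : (i:ℝ)*(1/(M:ℝ)) ≤ ((i:ℝ)+1)*(1/(M:ℝ)) := by
      apply mul_le_mul_of_nonneg_right (by linarith) (by positivity)
    have hbound : ∀ x ∈ Set.uIoc ((i:ℝ)*(1/(M:ℝ))) (((i:ℝ)+1)*(1/(M:ℝ))),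
        ‖(1/(M:ℝ))^(2*m+2) * bpoly (2*m+2) ((x - (i:ℝ)*(1/(M:ℝ))) * M)
          * iteratedDeriv (2*m+2) f x‖
          ≤ (1/(M:ℝ))^(2*m+2) * |bpoly (2*m+2) z| * B := by
      intro x hx
      rw [Set.uIoc_of_le hab] at hx
      obtain ⟨hx1, hx2⟩ := hx
      have hxa : 0 ≤ (x - (i:ℝ)*(1/(M:ℝ))) * M := by
        apply mul_nonneg (by linarith) (le_of_lt hMpos)
      have hxb : (x - (i:ℝ)*(1/(M:ℝ))) * M ≤ 1 := by
        have : x - (i:ℝ)*(1/(M:ℝ)) ≤ 1/(M:ℝ) := by linarith [hx2]; 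
        calc (x - (i:ℝ)*(1/(M:ℝ))) * M ≤ (1/(M:ℝ)) * M := by
              apply mul_le_mul_of_nonneg_right this (le_of_lt hMpos)
          _ = 1 := by field_simp
      have hxIcc : x ∈ Icc (0:ℝ) 1 := by
        constructor
        · have : 0 ≤ (i:ℝ)*(1/(M:ℝ)) := by positivity
          linarith
        · have hle : ((i:ℝ)+1) ≤ (M:ℝ) := by exact_mod_cast hi'
          have : ((i:ℝ)+1)*(1/(M:ℝ)) ≤ (M:ℝ)*(1/(M:ℝ)) :=
            mul_le_mul_of_nonneg_right hle (by positivity)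
          have h1 : (M:ℝ)*(1/(M:ℝ)) = 1 := by field_simp
          linarith
      have hb1 : |bpoly (2*m+2) ((x - (i:ℝ)*(1/(M:ℝ))) * M)| ≤ |bpoly (2*m+2) z| :=
        hzmax ⟨hxa, hxb⟩
      have hb2 : |iteratedDeriv (2*m+2) f x| ≤ B := hB x hxIcc
      rw [Real.norm_eq_abs, abs_mul, abs_mul, abs_pow, abs_of_nonneg (by positivity : (0:ℝ) ≤ 1/(M:ℝ))]
      gcongr
    have hest := intervalIntegral.norm_integral_le_of_norm_le_const hbound
    rw [Real.norm_eq_abs] at hest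
    calc |∫ x in ((i:ℝ)*(1/(M:ℝ)))..(((i:ℝ)+1)*(1/(M:ℝ))),
          (1/(M:ℝ))^(2*m+2) * bpoly (2*m+2) ((x - (i:ℝ)*(1/(M:ℝ))) * M)
            * iteratedDeriv (2*m+2) f x|
        ≤ ((1/(M:ℝ))^(2*m+2) * |bpoly (2*m+2) z| * B)
            * |(((i:ℝ)+1)*(1/(M:ℝ))) - ((i:ℝ)*(1/(M:ℝ)))| := hest
      _ = ((1/(M:ℝ))^(2*m+2) * |bpoly (2*m+2) z| * B) * (1/(M:ℝ)) := by
          congr 1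
          rw [abs_of_nonneg (by linarith)]
          ring
  calc |∑ i ∈ Finset.range M, ∫ x in ((i:ℝ)*(1/(M:ℝ)))..(((i:ℝ)+1)*(1/(M:ℝ))),
          (1/(M:ℝ))^(2*m+2) * bpoly (2*m+2) ((x - (i:ℝ)*(1/(M:ℝ))) * M)
            * iteratedDeriv (2*m+2) f x|
      ≤ ∑ i ∈ Finset.range M, |∫ x in ((i:ℝ)*(1/(M:ℝ)))..(((i:ℝ)+1)*(1/(M:ℝ))),
          (1/(M:ℝ))^(2*m+2) * bpoly (2*m+2) ((x - (i:ℝ)*(1/(M:ℝ))) * M)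
            * iteratedDeriv (2*m+2) f x| := Finset.abs_sum_le_sum_abs _ _
    _ ≤ ∑ _i ∈ Finset.range M,
          ((1/(M:ℝ))^(2*m+2) * |bpoly (2*m+2) z| * B) * (1/(M:ℝ)) :=
        Finset.sum_le_sum hper
    _ = (M:ℝ) * (((1/(M:ℝ))^(2*m+2) * |bpoly (2*m+2) z| * B) * (1/(M:ℝ))) := by
        rw [Finset.sum_const, Finset.card_range, nsmul_eq_mul]
    _ = |bpoly (2*m+2) z| * (1/(M:ℝ))^(2*m+2) * B := by
        field_simp
    _ ≤ (|bpoly (2*m+2) z| + 1) * (1/(M:ℝ))^(2*m+2) * B := by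
        have h1 : (0:ℝ) ≤ (1/(M:ℝ))^(2*m+2) := by positivity
        nlinarith [abs_nonneg (bpoly (2*m+2) z)]
end
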